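/- arXiv:1910.12424 — 13 statements merged into one kernel-verified Lean document; each statement's English description precedes it below -/
import Mathlib

section
/- Let d ≥ 1, let K ⊆ ℝ^d be a convex, compact set contained in the nonnegative orthant that is down-closed with lower bound 0, and suppose there exists r > 0 with r·B^d_{≥0} ⊆ K. Let δ > 0 be small enough that α := (√d+1)δ/r < 1, and define K' := (1−α)·K + δ·𝟙, where 𝟙 is the all-ones vector. Then K' is convex, compact, and down-closed with lower bound δ·𝟙 (i.e., δ·𝟙 ∈ K', every y ∈ K' satisfies y ≥ δ·𝟙, and whenever δ·𝟙 ≤ x ≤ y with y ∈ K', also x ∈ K'). -/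
open Metric Set

/-- The all-ones vector in `ℝ^d`. -/
def allOnes (d : ℕ) : EuclideanSpace ℝ (Fin d) := WithLp.toLp 2 (fun _ => 1)

/-- A set `P ⊆ ℝ^d` is down-closed with lower bound `u`: `u ∈ P`, every `y ∈ P`
satisfies `u ≤ y` coordinatewise, and whenever `u ≤ x ≤ y` with `y ∈ P`, also `x ∈ P`. -/
def DownClosedWithLB {d : ℕ} (u : EuclideanSpace ℝ (Fin d)) (P : Set (EuclideanSpace ℝ (Fin d))) :
    Prop :=
  u ∈ P ∧ (∀ y ∈ P, ∀ i, u i ≤ y i) ∧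
    ∀ x y : EuclideanSpace ℝ (Fin d), y ∈ P → (∀ i, u i ≤ x i) → (∀ i, x i ≤ y i) → x ∈ P

/-! The map `x ↦ c • x + v` with `c > 0` acts on each coordinate by the increasing affine
bijection `t ↦ c t + v_i`, so it carries an order interval `[u, y]` onto `[c u + v, c y + v]`. -/

section PositiveHomothety

variable {d : ℕ} {c : ℝ} (v : EuclideanSpace ℝ (Fin d))

theorem smul_add_apply_le_smul_add_apply_iff (hc : 0 < c) {x y : EuclideanSpace ℝ (Fin d)}
    (i : Fin d) : (c • x + v) i ≤ (c • y + v) i ↔ x i ≤ y i := by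
  change c * x i + v i ≤ c * y i + v i ↔ _
  rw [add_le_add_iff_right, mul_le_mul_iff_right₀ hc]

theorem DownClosedWithLB.image_smul_add (hc : 0 < c) {u : EuclideanSpace ℝ (Fin d)}
    {P : Set (EuclideanSpace ℝ (Fin d))} (hP : DownClosedWithLB u P) :
    DownClosedWithLB (c • u + v) ((fun x => c • x + v) '' P) := by
  obtain ⟨hu, hlb, hdown⟩ := hP
  refine ⟨⟨u, hu, rfl⟩, ?_, ?_⟩
  · rintro _ ⟨y, hy, rfl⟩ i
    exact (smul_add_apply_le_smul_add_apply_iff v hc i).2 (hlb y hy i)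
  · rintro x _ ⟨y, hy, rfl⟩ hux hxy
    have hx : c • (c⁻¹ • (x - v)) + v = x := by rw [smul_inv_smul₀ hc.ne', sub_add_cancel]
    refine ⟨c⁻¹ • (x - v), hdown _ y hy (fun i => ?_) (fun i => ?_), hx⟩
    · rw [← smul_add_apply_le_smul_add_apply_iff v hc, hx]
      exact hux i
    · rw [← smul_add_apply_le_smul_add_apply_iff v hc, hx]
      exact hxy i

end PositiveHomothety

theorem shrunk_translated_set_is_convex_compact_downclosed_general
    (d : ℕ) (K : Set (EuclideanSpace ℝ (Fin d)))
    (hconv : Convex ℝ K) (hcomp : IsCompact K)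
    (hdown : DownClosedWithLB (0 : EuclideanSpace ℝ (Fin d)) K)
    (δ : ℝ)
    (α : ℝ) (hα1 : α < 1)
    (K' : Set (EuclideanSpace ℝ (Fin d)))
    (hK' : K' = (fun x : EuclideanSpace ℝ (Fin d) => (1 - α) • x + δ • allOnes d) '' K) :
    Convex ℝ K' ∧ IsCompact K' ∧ DownClosedWithLB (δ • allOnes d) K' := by
  subst hK'
  refine ⟨?_, hcomp.image (by fun_prop), ?_⟩
  · simpa only [add_comm] using hconv.affinity (δ • allOnes d) (1 - α)
  · simpa using hdown.image_smul_add (δ • allOnes d) (sub_pos.2 hα1)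

theorem shrunk_translated_set_is_convex_compact_downclosed
    (d : ℕ) (hd : 1 ≤ d) (K : Set (EuclideanSpace ℝ (Fin d)))
    (hconv : Convex ℝ K) (hcomp : IsCompact K)
    (hpos : K ⊆ {x | ∀ i, 0 ≤ x i})
    (hdown : DownClosedWithLB (0 : EuclideanSpace ℝ (Fin d)) K)
    (r : ℝ) (hr : 0 < r)
    (hrK : (fun x : EuclideanSpace ℝ (Fin d) => r • x) ''
        (closedBall (0 : EuclideanSpace ℝ (Fin d)) 1 ∩ {x | ∀ i, 0 ≤ x i}) ⊆ K)
    (δ : ℝ) (hδ : 0 < δ)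
    (α : ℝ) (hα : α = (Real.sqrt d + 1) * δ / r) (hα1 : α < 1)
    (K' : Set (EuclideanSpace ℝ (Fin d)))
    (hK' : K' = (fun x : EuclideanSpace ℝ (Fin d) => (1 - α) • x + δ • allOnes d) '' K) :
    Convex ℝ K' ∧ IsCompact K' ∧ DownClosedWithLB (δ • allOnes d) K' :=
  shrunk_translated_set_is_convex_compact_downclosed_general d K hconv hcomp hdown δ α hα1 K' hK'
end

section
/- Let d ≥ 1, let K ⊆ ℝ^d be a convex, compact set contained in the nonnegative orthant that is down-closed with lower bound 0, and suppose there exists r > 0 with r·B^d_{≥0} ⊆ K. Let δ > 0 be small enough that α := (√d+1)δ/r < 1, and define K' := (1−α)·K + δ·𝟙. Then K' ⊆ K, and K' is a δ-interior of K: for every x ∈ K', the closed Euclidean ball of radius δ centered at x is contained in K (equivalently, the distance from x to the topological boundary of K is at least δ). -/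
open Metric Set

/-!
A point `z` at distance at most `δ` from `c := (1 - α) x + δ 𝟙` is `(1 - α) x + w` with
`w := δ 𝟙 + (z - c)`. The shift by `δ 𝟙` pushes `w` into the nonnegative orthant, and
`‖w‖ ≤ (√d + 1) δ = α r`, so `w = α y` with `y ∈ r B^d_{≥0} ⊆ K`; convexity puts
`z = (1 - α) x + α y` in `K`.
-/

lemma norm_allOnes (d : ℕ) : ‖allOnes d‖ = Real.sqrt d := by
  simp [EuclideanSpace.norm_eq, allOnes]

section

variable {d : ℕ} {δ : ℝ} {v : EuclideanSpace ℝ (Fin d)}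

lemma smul_allOnes_add_nonneg (hv : ‖v‖ ≤ δ) (i : Fin d) : 0 ≤ (δ • allOnes d + v) i := by
  have hvi : |v i| ≤ δ := (PiLp.norm_apply_le v i).trans hv
  simp only [PiLp.add_apply, PiLp.smul_apply, allOnes, smul_eq_mul, mul_one]
  linarith [(abs_le.mp hvi).1]

lemma norm_smul_allOnes_add_le (hv : ‖v‖ ≤ δ) :
    ‖δ • allOnes d + v‖ ≤ (Real.sqrt d + 1) * δ := by
  have hδ : 0 ≤ δ := (norm_nonneg v).trans hv
  calc ‖δ • allOnes d + v‖ ≤ ‖δ • allOnes d‖ + ‖v‖ := norm_add_le _ _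
    _ ≤ δ * Real.sqrt d + δ := by
        rw [norm_smul, norm_allOnes, Real.norm_of_nonneg hδ]; linarith
    _ = (Real.sqrt d + 1) * δ := by ring

end

lemma Convex.combo_mem_of_scaled_orthant_ball_subset {d : ℕ} {K : Set (EuclideanSpace ℝ (Fin d))}
    (hconv : Convex ℝ K) {r : ℝ} (hr : 0 < r)
    (hrK : (fun x : EuclideanSpace ℝ (Fin d) => r • x) ''
        (closedBall (0 : EuclideanSpace ℝ (Fin d)) 1 ∩ {x | ∀ i, 0 ≤ x i}) ⊆ K)
    {x w : EuclideanSpace ℝ (Fin d)} (hx : x ∈ K) {α : ℝ} (hα0 : 0 < α) (hα1 : α ≤ 1)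
    (hw_nonneg : ∀ i, 0 ≤ w i) (hw_norm : ‖w‖ ≤ α * r) :
    (1 - α) • x + w ∈ K := by
  have hαr : 0 < α * r := mul_pos hα0 hr
  set y := (α * r)⁻¹ • w
  have hy : y ∈ closedBall 0 1 ∩ {x | ∀ i, 0 ≤ x i} := by
    refine ⟨?_, fun i => mul_nonneg (inv_nonneg.mpr hαr.le) (hw_nonneg i)⟩
    rw [mem_closedBall_zero_iff, norm_smul, Real.norm_of_nonneg (inv_nonneg.mpr hαr.le)]
    exact inv_mul_le_one_of_le₀ hw_norm hαr.le
  have hw : w = α • r • y := by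
    rw [smul_smul, smul_smul, mul_inv_cancel₀ hαr.ne', one_smul]
  rw [hw]
  exact hconv hx (hrK ⟨y, hy, rfl⟩) (by linarith) hα0.le (by ring)

theorem shrunk_translated_set_is_delta_interior_general
    (d : ℕ) (K : Set (EuclideanSpace ℝ (Fin d)))
    (hconv : Convex ℝ K)
    (r : ℝ) (hr : 0 < r)
    (hrK : (fun x : EuclideanSpace ℝ (Fin d) => r • x) ''
        (closedBall (0 : EuclideanSpace ℝ (Fin d)) 1 ∩ {x | ∀ i, 0 ≤ x i}) ⊆ K)
    (δ : ℝ) (hδ : 0 < δ)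
    (α : ℝ) (hα : α = (Real.sqrt d + 1) * δ / r) (hα1 : α < 1)
    (K' : Set (EuclideanSpace ℝ (Fin d)))
    (hK' : K' = (fun x : EuclideanSpace ℝ (Fin d) => (1 - α) • x + δ • allOnes d) '' K) :
    K' ⊆ K ∧ ∀ x ∈ K', closedBall x δ ⊆ K := by
  have hα0 : 0 < α := by rw [hα]; positivity
  have hαr : α * r = (Real.sqrt d + 1) * δ := by rw [hα, div_mul_cancel₀ _ hr.ne']
  have hball : ∀ x ∈ K', closedBall x δ ⊆ K := by
    rw [hK']
    rintro _ ⟨x, hx, rfl⟩ z hz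
    set v := z - ((1 - α) • x + δ • allOnes d)
    have hv : ‖v‖ ≤ δ := by rwa [mem_closedBall, dist_eq_norm] at hz
    have hz_eq : z = (1 - α) • x + (δ • allOnes d + v) := by
      simp only [v]; abel
    rw [hz_eq]
    exact hconv.combo_mem_of_scaled_orthant_ball_subset hr hrK hx hα0 hα1.le
      (smul_allOnes_add_nonneg hv) (hαr ▸ norm_smul_allOnes_add_le hv)
  exact ⟨fun x hx => hball x hx (mem_closedBall_self hδ.le), hball⟩

theorem shrunk_translated_set_is_delta_interior
    (d : ℕ) (hd : 1 ≤ d) (K : Set (EuclideanSpace ℝ (Fin d)))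
    (hconv : Convex ℝ K) (hcomp : IsCompact K)
    (hpos : K ⊆ {x | ∀ i, 0 ≤ x i})
    (hdown : DownClosedWithLB (0 : EuclideanSpace ℝ (Fin d)) K)
    (r : ℝ) (hr : 0 < r)
    (hrK : (fun x : EuclideanSpace ℝ (Fin d) => r • x) ''
        (closedBall (0 : EuclideanSpace ℝ (Fin d)) 1 ∩ {x | ∀ i, 0 ≤ x i}) ⊆ K)
    (δ : ℝ) (hδ : 0 < δ)
    (α : ℝ) (hα : α = (Real.sqrt d + 1) * δ / r) (hα1 : α < 1)
    (K' : Set (EuclideanSpace ℝ (Fin d)))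
    (hK' : K' = (fun x : EuclideanSpace ℝ (Fin d) => (1 - α) • x + δ • allOnes d) '' K) :
    K' ⊆ K ∧ ∀ x ∈ K', closedBall x δ ⊆ K :=
  shrunk_translated_set_is_delta_interior_general d K hconv r hr hrK δ hδ α hα hα1 K' hK'
end

section
/- Let d ≥ 1 and let a ∈ ℝ^d be a point on a sphere centered at the origin (i.e., ‖a‖ > 0) that is not contained in the nonnegative orthant, i.e., a_i < 0 for some coordinate i. Then there exists a point b ∈ ℝ^d on the same sphere, ‖b‖ = ‖a‖, such that every coordinate of b − a is strictly positive and every coordinate of b is nonnegative. -/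
/-!
Raise every coordinate of `a` to at least a small `ε > 0`. For `ε = 0` this replaces the negative
coordinates by `0` and so strictly shrinks the norm; by continuity the norm stays below `‖a‖` for
some `ε > 0`. Rescaling this positive vector `c ≥ a` by `‖a‖ / ‖c‖ > 1` puts it back on the sphere
and makes it strictly larger than `a` in every coordinate.
-/

open Topology

namespace EuclideanSpace

variable {ι : Type*}

noncomputable def maxConst (a : EuclideanSpace ℝ ι) (t : ℝ) : EuclideanSpace ℝ ι :=
  WithLp.toLp 2 fun i => max (a i) t

theorem continuous_maxConst (a : EuclideanSpace ℝ ι) : Continuous (maxConst a) :=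
  (PiLp.continuous_toLp 2 _).comp (continuous_pi fun _ => continuous_const.max continuous_id)

variable [Fintype ι]

theorem norm_lt_norm_of_norm_apply_le {𝕜 : Type*} [RCLike 𝕜] {x y : EuclideanSpace 𝕜 ι}
    (hle : ∀ i, ‖x i‖ ≤ ‖y i‖) (hlt : ∃ i, ‖x i‖ < ‖y i‖) : ‖x‖ < ‖y‖ := by
  rw [EuclideanSpace.norm_eq, EuclideanSpace.norm_eq]
  refine Real.sqrt_lt_sqrt (by positivity) (Finset.sum_lt_sum (fun i _ => ?_) ?_)
  · exact pow_le_pow_left₀ (norm_nonneg _) (hle i) 2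
  · obtain ⟨i, hi⟩ := hlt
    exact ⟨i, Finset.mem_univ i, pow_lt_pow_left₀ hi (norm_nonneg _) two_ne_zero⟩

theorem norm_maxConst_zero_lt {a : EuclideanSpace ℝ ι} (hneg : ∃ i, a i < 0) :
    ‖maxConst a 0‖ < ‖a‖ := by
  refine norm_lt_norm_of_norm_apply_le (fun i => ?_) ?_
  · simp only [maxConst, Real.norm_eq_abs]
    rw [abs_of_nonneg (le_max_right _ _)]
    exact max_le (le_abs_self _) (abs_nonneg _)
  · obtain ⟨i, hi⟩ := hneg
    exact ⟨i, by simp [maxConst, max_eq_right hi.le, hi.ne]⟩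

theorem exists_pos_norm_maxConst_lt {a : EuclideanSpace ℝ ι} (hneg : ∃ i, a i < 0) :
    ∃ ε > 0, ‖maxConst a ε‖ < ‖a‖ := by
  have hnear : ∀ᶠ t in 𝓝 0, ‖maxConst a t‖ < ‖a‖ :=
    (continuous_maxConst a).norm.continuousAt.eventually_lt continuousAt_const
      (norm_maxConst_zero_lt hneg)
  exact ((eventually_mem_nhdsWithin (s := Set.Ioi 0)).and (nhdsWithin_le_nhds hnear)).exists

theorem exists_norm_eq_and_lt_apply {c : EuclideanSpace ℝ ι} {r : ℝ} (hc : ∀ i, 0 < c i)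
    (hc0 : c ≠ 0) (hr : ‖c‖ < r) : ∃ b : EuclideanSpace ℝ ι, ‖b‖ = r ∧ ∀ i, c i < b i := by
  have hcpos : 0 < ‖c‖ := norm_pos_iff.mpr hc0
  have hscale : 1 < r / ‖c‖ := (one_lt_div hcpos).mpr hr
  refine ⟨(r / ‖c‖) • c, ?_, fun i => ?_⟩
  · rw [norm_smul, Real.norm_of_nonneg (by positivity), div_mul_cancel₀ _ hcpos.ne']
  · exact (lt_mul_iff_one_lt_left (hc i)).mpr hscale

end EuclideanSpace

open EuclideanSpace in
theorem exists_nonneg_point_on_sphere_dominating_general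
    (d : ℕ) (a : EuclideanSpace ℝ (Fin d))
    (hneg : ∃ i, a i < 0) :
    ∃ b : EuclideanSpace ℝ (Fin d),
      ‖b‖ = ‖a‖ ∧ (∀ i, 0 < b i - a i) ∧ (∀ i, 0 ≤ b i) := by
  obtain ⟨ε, hε, hlt⟩ := exists_pos_norm_maxConst_lt hneg
  have hpos : ∀ i, 0 < maxConst a ε i := fun i => hε.trans_le (le_max_right _ _)
  have hne : maxConst a ε ≠ 0 := by
    obtain ⟨i, -⟩ := hneg
    exact fun h => (hpos i).ne' (by rw [h]; rfl)
  obtain ⟨b, hb, hcb⟩ := exists_norm_eq_and_lt_apply hpos hne hlt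
  refine ⟨b, hb, fun i => ?_, fun i => (hpos i).trans (hcb i) |>.le⟩
  exact sub_pos.mpr ((le_max_left _ ε).trans_lt (hcb i))

theorem exists_nonneg_point_on_sphere_dominating
    (d : ℕ) (hd : 1 ≤ d) (a : EuclideanSpace ℝ (Fin d))
    (ha : 0 < ‖a‖) (hneg : ∃ i, a i < 0) :
    ∃ b : EuclideanSpace ℝ (Fin d),
      ‖b‖ = ‖a‖ ∧ (∀ i, 0 < b i - a i) ∧ (∀ i, 0 ≤ b i) :=
  exists_nonneg_point_on_sphere_dominating_general d a hneg
end

section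
/- Let d ≥ 1, let K ⊆ ℝ^d be a convex, compact set contained in the nonnegative orthant that is down-closed with lower bound 0, and suppose there exists r > 0 with r·B^d_{≥0} ⊆ K. Let δ > 0 be small enough that α := (√d+1)δ/r < 1. Then for every point a' ∈ (1−α)·K and every point s in the topological boundary of K all of whose coordinates are strictly positive, one has ‖a' − s‖ ≥ (√d+1)·δ. -/
/-!
Write `a' = (1 - α) a` with `a ∈ K`. By convexity `K` contains `a' + w` for every `w ≥ 0` with
`‖w‖ ≤ α r`, and by down-closedness then every `z ≥ 0` whose coordinatewise excess over `a'`,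
`(z - a')⁺`, has norm at most `α r`. Strict versions of these conditions define an open set, and
it contains `s` as soon as `‖a' - s‖ < α r = (√d + 1) δ`, because `‖(s - a')⁺‖ ≤ ‖s - a'‖`.
Then `s` would be an interior point of `K`.
-/

open Metric Set

open Filter Topology

noncomputable def coordPosPart {ι : Type*} (x : EuclideanSpace ℝ ι) : EuclideanSpace ℝ ι :=
  WithLp.toLp 2 fun i => (x i)⁺

section coordPosPart

variable {ι : Type*}

@[simp]
lemma coordPosPart_apply (x : EuclideanSpace ℝ ι) (i : ι) : coordPosPart x i = (x i)⁺ := rfl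

lemma norm_coordPosPart_le [Fintype ι] (x : EuclideanSpace ℝ ι) : ‖coordPosPart x‖ ≤ ‖x‖ := by
  refine (sq_le_sq₀ (norm_nonneg _) (norm_nonneg _)).1 ?_
  rw [EuclideanSpace.real_norm_sq_eq, EuclideanSpace.real_norm_sq_eq]
  refine Finset.sum_le_sum fun i _ => ?_
  rw [coordPosPart_apply, sq_le_sq, abs_of_nonneg (posPart_nonneg _)]
  exact max_le (le_abs_self _) (abs_nonneg _)

lemma continuous_coordPosPart : Continuous (coordPosPart : EuclideanSpace ℝ ι → _) :=
  (PiLp.continuous_toLp 2 _).comp <|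
    continuous_pi fun i => continuous_posPart.comp (PiLp.continuous_apply 2 _ i)

end coordPosPart

lemma one_sub_smul_add_mem {ι : Type*} [Fintype ι] {K : Set (EuclideanSpace ℝ ι)} {r α : ℝ}
    (hK : Convex ℝ K)
    (hrK : (fun x : EuclideanSpace ℝ ι => r • x) ''
        (closedBall (0 : EuclideanSpace ℝ ι) 1 ∩ {x | ∀ i, 0 ≤ x i}) ⊆ K)
    (hr : 0 < r) (hα0 : 0 < α) (hα1 : α ≤ 1) {a w : EuclideanSpace ℝ ι} (ha : a ∈ K)
    (hw : ‖w‖ ≤ α * r) (hw0 : ∀ i, 0 ≤ w i) : (1 - α) • a + w ∈ K := by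
  have hαr : 0 < α * r := mul_pos hα0 hr
  have hu : (α * r)⁻¹ • w ∈ closedBall 0 1 ∩ {x | ∀ i, 0 ≤ x i} := by
    refine ⟨?_, fun i => ?_⟩
    · rw [mem_closedBall_zero_iff, norm_smul, Real.norm_of_nonneg (inv_nonneg.2 hαr.le)]
      exact inv_mul_le_one_of_le₀ hw hαr.le
    · simpa using mul_nonneg (inv_nonneg.2 hαr.le) (hw0 i)
  have hw_eq : α • r • (α * r)⁻¹ • w = w := by
    rw [smul_smul, smul_smul, mul_inv_cancel₀ hαr.ne', one_smul]
  have hmem := hK ha (hrK ⟨_, hu, rfl⟩) (sub_nonneg.2 hα1) hα0.le (sub_add_cancel 1 α)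
  rwa [hw_eq] at hmem

variable {d : ℕ} {K : Set (EuclideanSpace ℝ (Fin d))} {r α : ℝ}

lemma mem_of_norm_coordPosPart_sub_le (hK : Convex ℝ K)
    (hdown : DownClosedWithLB (0 : EuclideanSpace ℝ (Fin d)) K)
    (hrK : (fun x : EuclideanSpace ℝ (Fin d) => r • x) ''
        (closedBall (0 : EuclideanSpace ℝ (Fin d)) 1 ∩ {x | ∀ i, 0 ≤ x i}) ⊆ K)
    (hr : 0 < r) (hα0 : 0 < α) (hα1 : α ≤ 1) {a z : EuclideanSpace ℝ (Fin d)} (ha : a ∈ K)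
    (hz0 : ∀ i, 0 ≤ z i) (hz : ‖coordPosPart (z - (1 - α) • a)‖ ≤ α * r) : z ∈ K := by
  refine hdown.2.2 z _ (one_sub_smul_add_mem hK hrK hr hα0 hα1 ha hz fun i => ?_)
    (by simpa using hz0) fun i => ?_
  · exact posPart_nonneg _
  · have hexcess := le_posPart (z i - ((1 - α) • a) i)
    simp only [PiLp.add_apply, coordPosPart_apply, PiLp.sub_apply] at hexcess ⊢
    linarith

lemma mem_interior_of_norm_sub_lt (hK : Convex ℝ K)
    (hdown : DownClosedWithLB (0 : EuclideanSpace ℝ (Fin d)) K)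
    (hrK : (fun x : EuclideanSpace ℝ (Fin d) => r • x) ''
        (closedBall (0 : EuclideanSpace ℝ (Fin d)) 1 ∩ {x | ∀ i, 0 ≤ x i}) ⊆ K)
    (hr : 0 < r) (hα0 : 0 < α) (hα1 : α ≤ 1) {a s : EuclideanSpace ℝ (Fin d)} (ha : a ∈ K)
    (hspos : ∀ i, 0 < s i) (hs : ‖(1 - α) • a - s‖ < α * r) : s ∈ interior K := by
  have hs' : ‖coordPosPart (s - (1 - α) • a)‖ < α * r :=
    (norm_coordPosPart_le _).trans_lt (by rwa [norm_sub_rev])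
  rw [mem_interior_iff_mem_nhds]
  filter_upwards [eventually_all.2 fun i =>
      (PiLp.continuous_apply 2 _ i).continuousAt.eventually (lt_mem_nhds (hspos i)),
    (continuous_coordPosPart.comp (continuous_sub_right _)).norm.continuousAt.eventually
      (gt_mem_nhds hs')] with z hz0 hz
  exact mem_of_norm_coordPosPart_sub_le hK hdown hrK hr hα0 hα1 ha (fun i => (hz0 i).le) hz.le

theorem dist_shrunk_point_to_positive_boundary_general
    (d : ℕ) (K : Set (EuclideanSpace ℝ (Fin d)))
    (hconv : Convex ℝ K)
    (hdown : DownClosedWithLB (0 : EuclideanSpace ℝ (Fin d)) K)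
    (r : ℝ) (hr : 0 < r)
    (hrK : (fun x : EuclideanSpace ℝ (Fin d) => r • x) ''
        (closedBall (0 : EuclideanSpace ℝ (Fin d)) 1 ∩ {x | ∀ i, 0 ≤ x i}) ⊆ K)
    (δ : ℝ) (hδ : 0 < δ)
    (α : ℝ) (hα : α = (Real.sqrt d + 1) * δ / r) (hα1 : α < 1)
    (a' : EuclideanSpace ℝ (Fin d))
    (ha' : a' ∈ (fun x : EuclideanSpace ℝ (Fin d) => (1 - α) • x) '' K)
    (s : EuclideanSpace ℝ (Fin d)) (hs : s ∈ frontier K) (hspos : ∀ i, 0 < s i) :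
    (Real.sqrt d + 1) * δ ≤ ‖a' - s‖ := by
  obtain ⟨a, ha, rfl⟩ := ha'
  have hα0 : 0 < α := by rw [hα]; positivity
  have hαr : α * r = (Real.sqrt d + 1) * δ := by rw [hα]; field_simp
  by_contra! hlt
  rw [← hαr] at hlt
  exact hs.2 (mem_interior_of_norm_sub_lt hconv hdown hrK hr hα0 hα1.le ha hspos hlt)

theorem dist_shrunk_point_to_positive_boundary
    (d : ℕ) (hd : 1 ≤ d) (K : Set (EuclideanSpace ℝ (Fin d)))
    (hconv : Convex ℝ K) (hcomp : IsCompact K)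
    (hpos : K ⊆ {x | ∀ i, 0 ≤ x i})
    (hdown : DownClosedWithLB (0 : EuclideanSpace ℝ (Fin d)) K)
    (r : ℝ) (hr : 0 < r)
    (hrK : (fun x : EuclideanSpace ℝ (Fin d) => r • x) ''
        (closedBall (0 : EuclideanSpace ℝ (Fin d)) 1 ∩ {x | ∀ i, 0 ≤ x i}) ⊆ K)
    (δ : ℝ) (hδ : 0 < δ)
    (α : ℝ) (hα : α = (Real.sqrt d + 1) * δ / r) (hα1 : α < 1)
    (a' : EuclideanSpace ℝ (Fin d))
    (ha' : a' ∈ (fun x : EuclideanSpace ℝ (Fin d) => (1 - α) • x) '' K)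
    (s : EuclideanSpace ℝ (Fin d)) (hs : s ∈ frontier K) (hspos : ∀ i, 0 < s i) :
    (Real.sqrt d + 1) * δ ≤ ‖a' - s‖ :=
  dist_shrunk_point_to_positive_boundary_general d K hconv hdown r hr hrK δ hδ α hα hα1 a' ha' s hs
    hspos
end

section
/- Let d ≥ 1, let K ⊆ ℝ^d be a convex, compact set contained in the nonnegative orthant that is down-closed with lower bound 0, and suppose there exists r > 0 with r·B^d_{≥0} ⊆ K. Let δ > 0 be small enough that α := (√d+1)δ/r < 1, let a' ∈ (1−α)·K, and let ∂*K denote the set of boundary points of K all of whose coordinates are strictly positive. If a lies in the closure of ∂*K and ‖a − a'‖ = inf_{x ∈ ∂*K} ‖x − a'‖, then every coordinate of a − a' is nonnegative. -/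
open Metric Set

/-
Let `ρ = ‖a - a'‖`. The ball `B(a', ρ)` contains no boundary point of `K` with positive
coordinates, so its intersection with the open positive orthant, being connected and meeting `K`
(on a segment from `a'` to a positive point of `r • B`), lies in the interior of `K`.
If `a i < a' i`, the coordinatewise maximum of `a` and `a'` is strictly closer to `a'` than `a`.
Hence for a positive boundary point `s` near `a`, `max s a'` is in that interior, and by
down-closedness so is `s ≤ max s a'`: a contradiction.
-/

theorem IsPreconnected.subset_interior_of_disjoint_frontier {X : Type*} [TopologicalSpace X]
    {s K : Set X} (hs : IsPreconnected s) (hsK : (s ∩ K).Nonempty)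
    (hfr : Disjoint s (frontier K)) : s ⊆ interior K := by
  have hsub : s ⊆ interior K ∪ (closure K)ᶜ := fun x hx => by
    by_cases hint : x ∈ interior K
    · exact Or.inl hint
    · exact Or.inr fun hcl => hfr.ne_of_mem hx ⟨hcl, hint⟩ rfl
  refine hs.subset_left_of_subset_union isOpen_interior isClosed_closure.isOpen_compl
    (disjoint_compl_right.mono_left interior_subset_closure) hsub ?_
  obtain ⟨x, hxs, hxK⟩ := hsK
  exact ⟨x, hxs, (hsub hxs).resolve_right (not_not.2 (subset_closure hxK))⟩

theorem ball_inter_subset_interior_of_le_infDist {E : Type*} [NormedAddCommGroup E]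
    [NormedSpace ℝ E] {K C : Set E} {x : E} {ρ : ℝ} (hC : Convex ℝ C)
    (hx : x ∈ closure (K ∩ C)) (hρ : ρ ≤ infDist x (frontier K ∩ C)) :
    ball x ρ ∩ C ⊆ interior K := by
  intro y hy
  refine ((convex_ball x ρ).inter hC).isPreconnected.subset_interior_of_disjoint_frontier
    ?_ ?_ hy
  · obtain ⟨z, ⟨hzK, hzC⟩, hxz⟩ := Metric.mem_closure_iff.1 hx ρ (pos_of_mem_ball hy.1)
    exact ⟨z, ⟨mem_ball'.2 hxz, hzC⟩, hzK⟩
  · rw [Set.disjoint_left]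
    rintro z ⟨hzx, hzC⟩ hzK
    exact (mem_ball'.1 hzx).not_ge (hρ.trans (infDist_le_dist_of_mem ⟨hzK, hzC⟩))

def positiveOrthant (ι : Type*) : Set (EuclideanSpace ℝ ι) := {x | ∀ i, 0 < x i}

theorem positiveOrthant_eq_iInter {ι : Type*} :
    positiveOrthant ι = ⋂ i, {x : EuclideanSpace ℝ ι | 0 < EuclideanSpace.proj i x} :=
  Set.ofPred_forall _

theorem convex_positiveOrthant {ι : Type*} : Convex ℝ (positiveOrthant ι) := by
  rw [positiveOrthant_eq_iInter]
  exact convex_iInter fun i => convex_halfSpace_gt (EuclideanSpace.proj i).isLinear 0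

section PositiveOrthant

variable {ι : Type*} [Fintype ι]

theorem isOpen_positiveOrthant : IsOpen (positiveOrthant ι) := by
  rw [positiveOrthant_eq_iInter]
  exact isOpen_iInter_of_finite fun i =>
    isOpen_lt continuous_const (EuclideanSpace.proj i).continuous

theorem closedBall_one_inter_positiveOrthant_nonempty :
    (closedBall (0 : EuclideanSpace ℝ ι) 1 ∩ positiveOrthant ι).Nonempty := by
  set e : EuclideanSpace ℝ ι := WithLp.toLp 2 fun _ => 1
  refine ⟨(‖e‖ + 1)⁻¹ • e, ?_, fun i => by simp [e]; positivity⟩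
  rw [mem_closedBall_zero_iff, norm_smul, Real.norm_of_nonneg (by positivity),
    inv_mul_le_one₀ (by positivity)]
  exact le_add_of_nonneg_right zero_le_one

theorem Convex.mem_closure_inter_positiveOrthant {K : Set (EuclideanSpace ℝ ι)}
    (hK : Convex ℝ K) {x p : EuclideanSpace ℝ ι} (hx : x ∈ K) (hx0 : ∀ i, 0 ≤ x i)
    (hp : p ∈ K ∩ positiveOrthant ι) : x ∈ closure (K ∩ positiveOrthant ι) := by
  have hseg : openSegment ℝ x p ⊆ positiveOrthant ι := by
    rintro _ ⟨s, t, hs, ht, -, rfl⟩ i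
    simp only [PiLp.add_apply, PiLp.smul_apply, smul_eq_mul]
    exact add_pos_of_nonneg_of_pos (mul_nonneg hs.le (hx0 i)) (mul_pos ht (hp.2 i))
  exact closure_mono (subset_inter (hK.openSegment_subset hx hp.1) hseg)
    (segment_subset_closure_openSegment (left_mem_segment ℝ x p))

end PositiveOrthant

section PointwiseMax

variable {ι : Type*}

def pointwiseMax (x y : EuclideanSpace ℝ ι) : EuclideanSpace ℝ ι :=
  WithLp.toLp 2 fun i => max (x i) (y i)

@[simp]
theorem pointwiseMax_apply (x y : EuclideanSpace ℝ ι) (i : ι) :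
    pointwiseMax x y i = max (x i) (y i) :=
  rfl

theorem continuous_pointwiseMax_left (y : EuclideanSpace ℝ ι) :
    Continuous fun x => pointwiseMax x y := by
  unfold pointwiseMax
  fun_prop

theorem norm_pointwiseMax_sub_lt [Fintype ι] {x y : EuclideanSpace ℝ ι} (h : ∃ i, x i < y i) :
    ‖pointwiseMax x y - y‖ < ‖x - y‖ := by
  rw [← sq_lt_sq₀ (norm_nonneg _) (norm_nonneg _), EuclideanSpace.real_norm_sq_eq,
    EuclideanSpace.real_norm_sq_eq]
  obtain ⟨i, hi⟩ := h
  refine Finset.sum_lt_sum (fun j _ => ?_) ⟨i, Finset.mem_univ i, ?_⟩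
  · simp only [PiLp.sub_apply, pointwiseMax_apply]
    rcases le_total (x j) (y j) with hxy | hxy
    · simp [max_eq_right hxy, sq_nonneg]
    · simp [max_eq_left hxy]
  · simpa [max_eq_right hi.le] using sq_pos_of_neg (sub_neg.2 hi)

end PointwiseMax

namespace DownClosedWithLB

variable {d : ℕ} {K : Set (EuclideanSpace ℝ (Fin d))}

theorem smul_mem (hK : DownClosedWithLB 0 K) {x : EuclideanSpace ℝ (Fin d)} (hx : x ∈ K)
    {t : ℝ} (ht0 : 0 ≤ t) (ht1 : t ≤ 1) : t • x ∈ K :=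
  hK.2.2 _ x hx (fun i => by simpa using mul_nonneg ht0 (hK.2.1 x hx i))
    (fun i => by simpa using mul_le_of_le_one_left (hK.2.1 x hx i) ht1)

theorem mem_interior_of_le (hK : DownClosedWithLB 0 K) {x y : EuclideanSpace ℝ (Fin d)}
    (hx : x ∈ positiveOrthant (Fin d)) (hxy : ∀ i, x i ≤ y i) (hy : y ∈ interior K) :
    x ∈ interior K := by
  have hopen : IsOpen ((· + (y - x)) ⁻¹' interior K ∩ positiveOrthant (Fin d)) :=
    (isOpen_interior.preimage (continuous_add_const _)).inter isOpen_positiveOrthant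
  refine interior_maximal ?_ hopen ⟨by simpa using hy, hx⟩
  rintro t ⟨ht, htpos⟩
  exact hK.2.2 t _ (interior_subset ht) (fun i => (htpos i).le)
    (fun i => by simpa using hxy i)

end DownClosedWithLB

theorem closest_positive_boundary_point_dominates_general
    (d : ℕ) (K : Set (EuclideanSpace ℝ (Fin d)))
    (hconv : Convex ℝ K)
    (hdown : DownClosedWithLB (0 : EuclideanSpace ℝ (Fin d)) K)
    (r : ℝ) (hr : 0 < r)
    (hrK : (fun x : EuclideanSpace ℝ (Fin d) => r • x) ''
        (closedBall (0 : EuclideanSpace ℝ (Fin d)) 1 ∩ {x | ∀ i, 0 ≤ x i}) ⊆ K)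
    (δ : ℝ) (hδ : 0 < δ)
    (α : ℝ) (hα : α = (Real.sqrt d + 1) * δ / r) (hα1 : α < 1)
    (a' : EuclideanSpace ℝ (Fin d))
    (ha' : a' ∈ (fun x : EuclideanSpace ℝ (Fin d) => (1 - α) • x) '' K)
    (a : EuclideanSpace ℝ (Fin d))
    (ha : a ∈ closure {x : EuclideanSpace ℝ (Fin d) | x ∈ frontier K ∧ ∀ i, 0 < x i})
    (hmin : ‖a - a'‖ =
      Metric.infDist a' {x : EuclideanSpace ℝ (Fin d) | x ∈ frontier K ∧ ∀ i, 0 < x i}) :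
    ∀ i, 0 ≤ a i - a' i := by
  intro i
  by_contra! hai
  obtain ⟨w, hwK, hw⟩ := ha'
  have hα0 : 0 ≤ α := by rw [hα]; positivity
  have ha'K : a' ∈ K := by
    rw [← hw]
    exact hdown.smul_mem hwK (by linarith) (by linarith)
  obtain ⟨v, hv, hv0⟩ := closedBall_one_inter_positiveOrthant_nonempty (ι := Fin d)
  have hp : r • v ∈ K ∩ positiveOrthant (Fin d) :=
    ⟨hrK ⟨v, ⟨hv, fun j => (hv0 j).le⟩, rfl⟩, fun j => by simpa using mul_pos hr (hv0 j)⟩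
  have hball : ball a' ‖a - a'‖ ∩ positiveOrthant (Fin d) ⊆ interior K :=
    ball_inter_subset_interior_of_le_infDist convex_positiveOrthant
      (hconv.mem_closure_inter_positiveOrthant ha'K (hdown.2.1 a' ha'K) hp) hmin.le
  have hmax : pointwiseMax a a' ∈ ball a' ‖a - a'‖ := by
    rw [mem_ball, dist_eq_norm]
    exact norm_pointwiseMax_sub_lt ⟨i, by linarith⟩
  have hopen : IsOpen ((fun x => pointwiseMax x a') ⁻¹' ball a' ‖a - a'‖) :=
    isOpen_ball.preimage (continuous_pointwiseMax_left a')
  obtain ⟨s, hs_near, hs_fr, hs_pos⟩ := _root_.mem_closure_iff.1 ha _ hopen hmax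
  have hs_max : pointwiseMax s a' ∈ interior K :=
    hball ⟨hs_near, fun j => (hs_pos j).trans_le (le_max_left _ _)⟩
  exact hs_fr.2 (hdown.mem_interior_of_le hs_pos (fun j => le_max_left _ _) hs_max)

theorem closest_positive_boundary_point_dominates
    (d : ℕ) (hd : 1 ≤ d) (K : Set (EuclideanSpace ℝ (Fin d)))
    (hconv : Convex ℝ K) (hcomp : IsCompact K)
    (hpos : K ⊆ {x | ∀ i, 0 ≤ x i})
    (hdown : DownClosedWithLB (0 : EuclideanSpace ℝ (Fin d)) K)
    (r : ℝ) (hr : 0 < r)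
    (hrK : (fun x : EuclideanSpace ℝ (Fin d) => r • x) ''
        (closedBall (0 : EuclideanSpace ℝ (Fin d)) 1 ∩ {x | ∀ i, 0 ≤ x i}) ⊆ K)
    (δ : ℝ) (hδ : 0 < δ)
    (α : ℝ) (hα : α = (Real.sqrt d + 1) * δ / r) (hα1 : α < 1)
    (a' : EuclideanSpace ℝ (Fin d))
    (ha' : a' ∈ (fun x : EuclideanSpace ℝ (Fin d) => (1 - α) • x) '' K)
    (a : EuclideanSpace ℝ (Fin d))
    (ha : a ∈ closure {x : EuclideanSpace ℝ (Fin d) | x ∈ frontier K ∧ ∀ i, 0 < x i})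
    (hmin : ‖a - a'‖ =
      Metric.infDist a' {x : EuclideanSpace ℝ (Fin d) | x ∈ frontier K ∧ ∀ i, 0 < x i}) :
    ∀ i, 0 ≤ a i - a' i :=
  closest_positive_boundary_point_dominates_general d K hconv hdown r hr hrK δ hδ α hα hα1 a' ha' a
    ha hmin
end

section
/- Let F : ℝ^d → ℝ be differentiable and continuous DR-submodular, i.e., x ≤ y coordinatewise implies ∇F(y)_i ≤ ∇F(x)_i for every coordinate i. Then F is concave along nonnegative directions: for all x ≤ y (coordinatewise), F(y) ≤ F(x) + ⟨∇F(x), y − x⟩. -/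
/-!
Restrict `F` to the segment `t ↦ x + t • (y - x)`. Every point of it lies above `x`, so by
DR-submodularity its gradient is coordinatewise below `∇F(x)`; pairing with the nonnegative
direction `y - x`, the derivative of the restriction never exceeds its value at `t = 0`, and the
mean value inequality on `[0, 1]` gives the claim.
-/

open InnerProductSpace Set

section Gradient

variable {E : Type*} [NormedAddCommGroup E] [InnerProductSpace ℝ E] [CompleteSpace E]

theorem HasGradientAt.hasDerivAt_comp_add_smul {F : E → ℝ} {g x v : E} {t : ℝ}
    (hF : HasGradientAt F g (x + t • v)) :
    HasDerivAt (fun s : ℝ => F (x + s • v)) ⟪g, v⟫_ℝ t := by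
  have hline : HasDerivAt (fun s : ℝ => x + s • v) v t := by
    simpa using ((hasDerivAt_id t).smul_const v).const_add x
  exact hF.hasFDerivAt.comp_hasDerivAt t hline

theorem le_add_inner_gradient_of_inner_gradient_le {F : E → ℝ} (hF : Differentiable ℝ F)
    {x y : E}
    (h : ∀ t ∈ Ioo (0 : ℝ) 1,
      ⟪gradient F (x + t • (y - x)), y - x⟫_ℝ ≤ ⟪gradient F x, y - x⟫_ℝ) :
    F y ≤ F x + ⟪gradient F x, y - x⟫_ℝ := by
  set φ : ℝ → ℝ := fun s => F (x + s • (y - x))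
  have hφ : ∀ t, HasDerivAt φ ⟪gradient F (x + t • (y - x)), y - x⟫_ℝ t := fun t =>
    (hF _).hasGradientAt.hasDerivAt_comp_add_smul
  have hφ_cont : Continuous φ := continuous_iff_continuousAt.2 fun t => (hφ t).continuousAt
  have hslope := (convex_Icc (0 : ℝ) 1).image_sub_le_mul_sub_of_deriv_le hφ_cont.continuousOn
    (fun t _ => (hφ t).differentiableAt.differentiableWithinAt)
    (fun t ht => (hφ t).deriv ▸ h t (by rwa [interior_Icc] at ht))
    0 (left_mem_Icc.2 zero_le_one) 1 (right_mem_Icc.2 zero_le_one) zero_le_one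
  simp only [φ, zero_smul, add_zero, one_smul, add_sub_cancel, sub_zero, mul_one] at hslope
  linarith

end Gradient

theorem EuclideanSpace.inner_le_inner_of_le_of_nonneg {ι : Type*} [Fintype ι]
    {a b v : EuclideanSpace ℝ ι} (hab : ∀ i, a i ≤ b i) (hv : ∀ i, 0 ≤ v i) :
    ⟪a, v⟫_ℝ ≤ ⟪b, v⟫_ℝ := by
  simp only [PiLp.inner_apply, RCLike.inner_apply, conj_trivial]
  exact Finset.sum_le_sum fun i _ => mul_le_mul_of_nonneg_left (hab i) (hv i)

theorem DR_submodular_concave_along_nonneg_directions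
    (d : ℕ) (F : EuclideanSpace ℝ (Fin d) → ℝ)
    (hdiff : Differentiable ℝ F)
    (hDR : ∀ x y : EuclideanSpace ℝ (Fin d), (∀ i, x i ≤ y i) →
      ∀ i, gradient F y i ≤ gradient F x i) :
    ∀ x y : EuclideanSpace ℝ (Fin d), (∀ i, x i ≤ y i) →
      F y ≤ F x + inner ℝ (gradient F x) (y - x) := by
  intro x y hxy
  have hdir : ∀ i, 0 ≤ (y - x) i := fun i => by simpa using hxy i
  refine le_add_inner_gradient_of_inner_gradient_le hdiff fun t ht => ?_
  refine EuclideanSpace.inner_le_inner_of_le_of_nonneg (hDR _ _ fun i => ?_) hdir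
  simpa using mul_nonneg ht.1.le (hdir i)
end

section
/- Let F : ℝ^d → ℝ be differentiable, monotone, and continuous DR-submodular, and let u, x, x* ∈ ℝ^d satisfy u ≤ x and u ≤ x* coordinatewise. Then F(x*) − F(x) ≤ ⟨∇F(x), x* − u⟩. -/
/-!
Monotonicity makes every partial derivative of `F` nonnegative, and DR-submodularity makes
`t ↦ F (x + t • v)` have a nonincreasing derivative along any direction `v ≥ 0`, so
`F (x + v) - F x ≤ ⟪∇F x, v⟫`. Apply this to `v = (x* - x)⁺`: then `x* ≤ x + v` gives
`F x* ≤ F (x + v)`, and `0 ≤ v ≤ x* - u` together with `∇F x ≥ 0` gives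
`⟪∇F x, v⟫ ≤ ⟪∇F x, x* - u⟫`.
-/

lemma hasDerivAt_apply_add_smul {E : Type*} [NormedAddCommGroup E] [InnerProductSpace ℝ E]
    [CompleteSpace E] {F : E → ℝ} {p v : E} {t : ℝ} (hF : DifferentiableAt ℝ F (p + t • v)) :
    HasDerivAt (fun s : ℝ => F (p + s • v)) (inner ℝ (gradient F (p + t • v)) v) t := by
  have hline : HasDerivAt (fun s : ℝ => p + s • v) v t := by
    simpa using ((hasDerivAt_id t).smul_const v).const_add p
  exact hF.hasGradientAt.hasFDerivAt.comp_hasDerivAt t hline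

namespace EuclideanSpace

variable {ι : Type*} [Fintype ι]

lemma inner_le_inner_of_le_of_nonneg_s11 {a b v : EuclideanSpace ℝ ι} (hab : ∀ i, a i ≤ b i)
    (hv : ∀ i, 0 ≤ v i) : inner ℝ a v ≤ inner ℝ b v := by
  simp only [PiLp.inner_apply, RCLike.inner_apply, conj_trivial]
  exact Finset.sum_le_sum fun i _ => mul_le_mul_of_nonneg_left (hab i) (hv i)

lemma gradient_apply_nonneg {F : EuclideanSpace ℝ ι → ℝ}
    (hmono : ∀ x y : EuclideanSpace ℝ ι, (∀ i, x i ≤ y i) → F x ≤ F y)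
    {y : EuclideanSpace ℝ ι} (hF : DifferentiableAt ℝ F y) (i : ι) :
    0 ≤ gradient F y i := by
  classical
  let e : EuclideanSpace ℝ ι := single i 1
  have hline : Monotone fun t : ℝ => F (y + t • e) := fun s t hst =>
    hmono _ _ fun j => by
      by_cases hj : j = i <;> simp [e, hj, hst]
  have hderiv : HasDerivAt (fun t : ℝ => F (y + t • e)) (gradient F y i) 0 := by
    have h := hasDerivAt_apply_add_smul (p := y) (v := e) (t := 0) (by simpa using hF)
    simpa only [zero_smul, add_zero, e, inner_single_right, one_mul, conj_trivial] using h
  exact hderiv.deriv ▸ hline.deriv_nonneg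

lemma sub_le_inner_gradient_of_nonneg {F : EuclideanSpace ℝ ι → ℝ} (hF : Differentiable ℝ F)
    (hDR : ∀ x y : EuclideanSpace ℝ ι, (∀ i, x i ≤ y i) → ∀ i, gradient F y i ≤ gradient F x i)
    (x : EuclideanSpace ℝ ι) {v : EuclideanSpace ℝ ι} (hv : ∀ i, 0 ≤ v i) :
    F (x + v) - F x ≤ inner ℝ (gradient F x) v := by
  let g : ℝ → ℝ := fun t => F (x + t • v)
  have hg : ∀ t, HasDerivAt g (inner ℝ (gradient F (x + t • v)) v) t := fun t =>
    hasDerivAt_apply_add_smul (hF _)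
  have hg_deriv_le : ∀ t ∈ interior (Set.Ici (0 : ℝ)), deriv g t ≤ inner ℝ (gradient F x) v := by
    intro t ht
    rw [interior_Ici, Set.mem_Ioi] at ht
    have hx_le : ∀ i, x i ≤ (x + t • v) i := fun i => by
      simpa using mul_nonneg ht.le (hv i)
    rw [(hg t).deriv]
    exact inner_le_inner_of_le_of_nonneg_s11 (hDR _ _ hx_le) hv
  have hdiff : Differentiable ℝ g := fun t => (hg t).differentiableAt
  simpa [g] using (convex_Ici 0).image_sub_le_mul_sub_of_deriv_le hdiff.continuous.continuousOn
    hdiff.differentiableOn hg_deriv_le 0 Set.self_mem_Ici 1 (Set.mem_Ici.2 zero_le_one) zero_le_one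

end EuclideanSpace

open EuclideanSpace in
theorem monotone_DR_submodular_gradient_bound
    (d : ℕ) (F : EuclideanSpace ℝ (Fin d) → ℝ)
    (hdiff : Differentiable ℝ F)
    (hmono : ∀ x y : EuclideanSpace ℝ (Fin d), (∀ i, x i ≤ y i) → F x ≤ F y)
    (hDR : ∀ x y : EuclideanSpace ℝ (Fin d), (∀ i, x i ≤ y i) →
      ∀ i, gradient F y i ≤ gradient F x i)
    (u x xstar : EuclideanSpace ℝ (Fin d))
    (hux : ∀ i, u i ≤ x i) (huxs : ∀ i, u i ≤ xstar i) :
    F xstar - F x ≤ inner ℝ (gradient F x) (xstar - u) := by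
  let v : EuclideanSpace ℝ (Fin d) := WithLp.toLp 2 fun i => max (xstar i - x i) 0
  have hv_nonneg : ∀ i, 0 ≤ v i := fun i => le_max_right _ _
  have hv_le : ∀ i, v i ≤ (xstar - u) i := fun i => by
    rw [PiLp.sub_apply]
    exact max_le (by linarith [hux i]) (sub_nonneg.2 (huxs i))
  have hxstar_le : F xstar ≤ F (x + v) := hmono _ _ fun i =>
    sub_le_iff_le_add'.1 (le_max_left (xstar i - x i) 0)
  have hgain := sub_le_inner_gradient_of_nonneg hdiff hDR x hv_nonneg
  have hinner : inner ℝ (gradient F x) v ≤ inner ℝ (gradient F x) (xstar - u) := by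
    simpa only [real_inner_comm (gradient F x)] using
      inner_le_inner_of_le_of_nonneg_s11 hv_le (gradient_apply_nonneg hmono (hdiff x))
  linarith
end

section
/- Let 1 ≤ k ≤ K be natural numbers and let F_{k−1}, F_k, …, F_K : ℝ^d → ℝ be differentiable functions that are L2-smooth and whose gradients satisfy ‖∇F_i(z)‖ ≤ L1 for all z. Let x ∈ ℝ^d and v ∈ ℝ^d with ‖v‖ ≤ R, and set x' := x + v/K. Then ‖ (1/(K−k+1))·Σ_{i=k}^{K} ∇F_i(x') − (1/(K−k+2))·Σ_{i=k−1}^{K} ∇F_i(x) ‖ ≤ (L2·R + 2·L1)/(K−k+2). -/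
open Finset

theorem average_gradient_drift_bound
    (d : ℕ) (k K : ℕ) (hk : 1 ≤ k) (hkK : k ≤ K)
    (L1 L2 R : ℝ) (hL1 : 0 ≤ L1) (hL2 : 0 ≤ L2) (hR : 0 ≤ R)
    (F : ℕ → EuclideanSpace ℝ (Fin d) → ℝ)
    (hdiff : ∀ i ∈ Finset.Icc (k - 1) K, Differentiable ℝ (F i))
    (hsmooth : ∀ i ∈ Finset.Icc (k - 1) K, ∀ x y : EuclideanSpace ℝ (Fin d),
      ‖gradient (F i) x - gradient (F i) y‖ ≤ L2 * ‖x - y‖)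
    (hgrad : ∀ i ∈ Finset.Icc (k - 1) K, ∀ z : EuclideanSpace ℝ (Fin d),
      ‖gradient (F i) z‖ ≤ L1)
    (x v : EuclideanSpace ℝ (Fin d)) (hv : ‖v‖ ≤ R)
    (x' : EuclideanSpace ℝ (Fin d)) (hx' : x' = x + ((K : ℝ))⁻¹ • v) :
    ‖(((K : ℝ) - k + 1)⁻¹) • (∑ i ∈ Finset.Icc k K, gradient (F i) x')
        - (((K : ℝ) - k + 2)⁻¹) • (∑ i ∈ Finset.Icc (k - 1) K, gradient (F i) x)‖
      ≤ (L2 * R + 2 * L1) / ((K : ℝ) - k + 2) := by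
  have hK1 : 1 ≤ K := le_trans hk hkK
  have hKpos : (0:ℝ) < K := by exact_mod_cast Nat.pos_of_ne_zero (by omega)
  set n : ℕ := K - k + 1 with hn
  have hnK : n ≤ K := by omega
  have hn1 : 1 ≤ n := by omega
  have hnpos : (0:ℝ) < n := by exact_mod_cast hn1
  have hn1pos : (0:ℝ) < (n:ℝ) + 1 := by linarith
  have hcast1 : ((n:ℕ):ℝ) = (K:ℝ) - k + 1 := by
    rw [hn, Nat.cast_add, Nat.cast_sub hkK, Nat.cast_one]
  have hcast2 : (K:ℝ) - k + 2 = (n:ℝ) + 1 := by rw [hcast1]; ring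
  set g : ℕ → EuclideanSpace ℝ (Fin d) → EuclideanSpace ℝ (Fin d) :=
    fun i => gradient (F i) with hg
  set A := ∑ i ∈ Finset.Icc k K, g i x' with hA
  set B := ∑ i ∈ Finset.Icc k K, g i x with hB
  set G := g (k-1) x with hG
  have hmem : ∀ i ∈ Finset.Icc k K, i ∈ Finset.Icc (k-1) K := by
    intro i hi; simp only [Finset.mem_Icc] at *; omega
  have hk1mem : k - 1 ∈ Finset.Icc (k-1) K := by
    simp only [Finset.mem_Icc]; omega
  have hnotmem : k - 1 ∉ Finset.Icc k K := by
    simp only [Finset.mem_Icc]; omega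
  have hsplit : Finset.Icc (k-1) K = insert (k-1) (Finset.Icc k K) := by
    ext i; simp only [Finset.mem_Icc, Finset.mem_insert]; omega
  have hcardA : (Finset.Icc k K).card = n := by rw [Nat.card_Icc]; omega
  have hsum : ∑ i ∈ Finset.Icc (k-1) K, g i x = G + B := by
    rw [hsplit, Finset.sum_insert hnotmem]
  -- norm bounds
  have hnormA : ‖A‖ ≤ (n:ℝ) * L1 := by
    calc ‖A‖ ≤ ∑ i ∈ Finset.Icc k K, ‖g i x'‖ := norm_sum_le _ _
    _ ≤ ∑ i ∈ Finset.Icc k K, L1 :=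
        Finset.sum_le_sum (fun i hi => hgrad i (hmem i hi) x')
    _ = (n:ℝ) * L1 := by rw [Finset.sum_const, hcardA, nsmul_eq_mul]
  have hx'x : ‖x' - x‖ ≤ R / K := by
    rw [hx', add_sub_cancel_left, norm_smul]
    rw [norm_inv, Real.norm_natCast, div_eq_inv_mul]
    exact mul_le_mul_of_nonneg_left hv (by positivity)
  have hnormAB : ‖A - B‖ ≤ L2 * R := by
    have h1 : ‖A - B‖ ≤ (n:ℝ) * (L2 * (R / K)) := by
      rw [hA, hB, ← Finset.sum_sub_distrib]
      calc ‖∑ i ∈ Finset.Icc k K, (g i x' - g i x)‖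
          ≤ ∑ i ∈ Finset.Icc k K, ‖g i x' - g i x‖ := norm_sum_le _ _
      _ ≤ ∑ i ∈ Finset.Icc k K, L2 * (R / K) := by
          refine Finset.sum_le_sum (fun i hi => ?_)
          calc ‖g i x' - g i x‖ ≤ L2 * ‖x' - x‖ := hsmooth i (hmem i hi) x' x
          _ ≤ L2 * (R / K) := mul_le_mul_of_nonneg_left hx'x hL2
      _ = (n:ℝ) * (L2 * (R / K)) := by rw [Finset.sum_const, hcardA, nsmul_eq_mul]
    have h2 : (n:ℝ) * (L2 * (R / K)) ≤ L2 * R := by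
      have hnleK : (n:ℝ) ≤ K := by exact_mod_cast hnK
      have hRK : 0 ≤ L2 * (R / K) := by positivity
      calc (n:ℝ) * (L2 * (R / K)) ≤ (K:ℝ) * (L2 * (R / K)) :=
            mul_le_mul_of_nonneg_right hnleK hRK
      _ = L2 * R := by field_simp
    linarith
  have hnormG : ‖G‖ ≤ L1 := hgrad (k-1) hk1mem x
  -- algebraic decomposition
  rw [← hcast1, hcast2, hsum]
  have key : (n:ℝ)⁻¹ • A - ((n:ℝ)+1)⁻¹ • (G + B)
      = ((n:ℝ)+1)⁻¹ • (A - B) + (((n:ℝ)⁻¹ - ((n:ℝ)+1)⁻¹) • A - ((n:ℝ)+1)⁻¹ • G) := by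
    simp only [smul_sub, sub_smul, smul_add]
    abel
  rw [key]
  have hab : (0:ℝ) ≤ (n:ℝ)⁻¹ - ((n:ℝ)+1)⁻¹ := by
    have := inv_anti₀ hnpos (by linarith : (n:ℝ) ≤ (n:ℝ)+1)
    linarith
  calc ‖((n:ℝ)+1)⁻¹ • (A - B) + (((n:ℝ)⁻¹ - ((n:ℝ)+1)⁻¹) • A - ((n:ℝ)+1)⁻¹ • G)‖
      ≤ ‖((n:ℝ)+1)⁻¹ • (A - B)‖ + (‖((n:ℝ)⁻¹ - ((n:ℝ)+1)⁻¹) • A‖ + ‖((n:ℝ)+1)⁻¹ • G‖) :=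
        le_trans (norm_add_le _ _) (by gcongr; exact norm_sub_le _ _)
  _ = ((n:ℝ)+1)⁻¹ * ‖A - B‖ + (((n:ℝ)⁻¹ - ((n:ℝ)+1)⁻¹) * ‖A‖ + ((n:ℝ)+1)⁻¹ * ‖G‖) := by
        rw [norm_smul, norm_smul, norm_smul]
        rw [show ‖((n:ℝ)+1)⁻¹‖ = ((n:ℝ)+1)⁻¹ from abs_of_nonneg (by positivity),
          show ‖(n:ℝ)⁻¹ - ((n:ℝ)+1)⁻¹‖ = (n:ℝ)⁻¹ - ((n:ℝ)+1)⁻¹ from abs_of_nonneg hab]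
  _ ≤ ((n:ℝ)+1)⁻¹ * (L2 * R) + (((n:ℝ)⁻¹ - ((n:ℝ)+1)⁻¹) * ((n:ℝ) * L1) + ((n:ℝ)+1)⁻¹ * L1) := by
        gcongr
  _ = (L2 * R + 2 * L1) / ((n:ℝ) + 1) := by field_simp; ring
end

section
/- Let K, L be natural numbers with K ≥ 1 and L ≥ 2K, let 1 ≤ k ≤ K, and let F_{k−1}, F_k, …, F_L : ℝ^d → ℝ be differentiable functions that are L2-smooth and whose gradients satisfy ‖∇F_i(z)‖ ≤ L1 for all z. Let x ∈ ℝ^d and v ∈ ℝ^d with ‖v‖ ≤ R, and set x' := x + v/K. Then ‖ (1/(L−k+1))·Σ_{i=k}^{L} ∇F_i(x') − (1/(L−k+2))·Σ_{i=k−1}^{L} ∇F_i(x) ‖ ≤ (3·L2·R + 2·L1)/(k+2). -/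
open Finset

theorem average_gradient_drift_bound_long_block
    (d : ℕ) (k K L : ℕ) (hK : 1 ≤ K) (hL : 2 * K ≤ L) (hk : 1 ≤ k) (hkK : k ≤ K)
    (L1 L2 R : ℝ) (hL1 : 0 ≤ L1) (hL2 : 0 ≤ L2) (hR : 0 ≤ R)
    (F : ℕ → EuclideanSpace ℝ (Fin d) → ℝ)
    (hdiff : ∀ i ∈ Finset.Icc (k - 1) L, Differentiable ℝ (F i))
    (hsmooth : ∀ i ∈ Finset.Icc (k - 1) L, ∀ x y : EuclideanSpace ℝ (Fin d),
      ‖gradient (F i) x - gradient (F i) y‖ ≤ L2 * ‖x - y‖)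
    (hgrad : ∀ i ∈ Finset.Icc (k - 1) L, ∀ z : EuclideanSpace ℝ (Fin d),
      ‖gradient (F i) z‖ ≤ L1)
    (x v : EuclideanSpace ℝ (Fin d)) (hv : ‖v‖ ≤ R)
    (x' : EuclideanSpace ℝ (Fin d)) (hx' : x' = x + ((K : ℝ))⁻¹ • v) :
    ‖(((L : ℝ) - k + 1)⁻¹) • (∑ i ∈ Finset.Icc k L, gradient (F i) x')
        - (((L : ℝ) - k + 2)⁻¹) • (∑ i ∈ Finset.Icc (k - 1) L, gradient (F i) x)‖
      ≤ (3 * L2 * R + 2 * L1) / ((k : ℝ) + 2) := by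
  have hkL : k ≤ L := le_trans hkK (le_trans (by omega) hL)
  have hka : (k : ℝ) ≤ L := by exact_mod_cast hkL
  have hKr : (1:ℝ) ≤ K := by exact_mod_cast hK
  have hKpos : (0:ℝ) < K := by linarith
  set g : ℕ → EuclideanSpace ℝ (Fin d) → EuclideanSpace ℝ (Fin d) :=
    fun i => gradient (F i) with hg
  set a : ℝ := (L:ℝ) - k + 1 with ha
  set b : ℝ := (L:ℝ) - k + 2 with hb
  have ha1 : 1 ≤ a := by simp only [ha]; linarith
  have hapos : 0 < a := by linarith
  have hbpos : 0 < b := by simp only [hb]; linarith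
  -- b ≥ k + 2
  have hLr : (2:ℝ) * K ≤ L := by exact_mod_cast hL
  have hkKr : (k:ℝ) ≤ K := by exact_mod_cast hkK
  have hbk : (k:ℝ) + 2 ≤ b := by simp only [hb]; linarith
  have hk2pos : (0:ℝ) < (k:ℝ) + 2 := by positivity
  -- cardinality
  have hcard : ((Finset.Icc k L).card : ℝ) = a := by
    rw [Nat.card_Icc]
    have : L + 1 - k = L - k + 1 := by omega
    rw [this]
    push_cast [Nat.cast_sub hkL]
    ring
  -- distance between x' and x
  have hdist : ‖x' - x‖ ≤ R / K := by
    rw [hx']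
    have : x + ((K:ℝ))⁻¹ • v - x = ((K:ℝ))⁻¹ • v := by abel
    rw [this, norm_smul, Real.norm_eq_abs, abs_of_nonneg (by positivity)]
    rw [div_eq_inv_mul]
    exact mul_le_mul_of_nonneg_left hv (by positivity)
  -- membership transfer
  have hmem : ∀ i ∈ Finset.Icc k L, i ∈ Finset.Icc (k-1) L := by
    intro i hi; simp only [Finset.mem_Icc] at hi ⊢; omega
  have hnot : k - 1 ∉ Finset.Icc k L := by simp only [Finset.mem_Icc]; omega
  have hins : Finset.Icc (k-1) L = insert (k-1) (Finset.Icc k L) := by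
    ext i; simp only [Finset.mem_Icc, Finset.mem_insert]; omega
  have hT : ∑ i ∈ Finset.Icc (k-1) L, g i x
      = g (k-1) x + ∑ i ∈ Finset.Icc k L, g i x := by
    rw [hins, Finset.sum_insert hnot]
  -- decomposition
  have hdecomp :
      a⁻¹ • (∑ i ∈ Finset.Icc k L, g i x')
        - b⁻¹ • (∑ i ∈ Finset.Icc (k-1) L, g i x)
      = a⁻¹ • (∑ i ∈ Finset.Icc k L, (g i x' - g i x))
        + (a⁻¹ - b⁻¹) • (∑ i ∈ Finset.Icc k L, g i x)
        - b⁻¹ • g (k-1) x := by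
    rw [hT, Finset.sum_sub_distrib]
    module
  have hsum1 : ‖∑ i ∈ Finset.Icc k L, (g i x' - g i x)‖ ≤ a * (L2 * (R / K)) := by
    calc ‖∑ i ∈ Finset.Icc k L, (g i x' - g i x)‖
        ≤ ∑ i ∈ Finset.Icc k L, ‖g i x' - g i x‖ := norm_sum_le _ _
      _ ≤ ∑ i ∈ Finset.Icc k L, L2 * (R / K) := by
          apply Finset.sum_le_sum
          intro i hi
          calc ‖g i x' - g i x‖ ≤ L2 * ‖x' - x‖ := hsmooth i (hmem i hi) x' x
            _ ≤ L2 * (R / K) := mul_le_mul_of_nonneg_left hdist hL2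
      _ = ((Finset.Icc k L).card : ℝ) * (L2 * (R / K)) := by
          rw [Finset.sum_const, nsmul_eq_mul]
      _ = a * (L2 * (R / K)) := by rw [hcard]
  have hsum2 : ‖∑ i ∈ Finset.Icc k L, g i x‖ ≤ a * L1 := by
    calc ‖∑ i ∈ Finset.Icc k L, g i x‖
        ≤ ∑ i ∈ Finset.Icc k L, ‖g i x‖ := norm_sum_le _ _
      _ ≤ ∑ i ∈ Finset.Icc k L, L1 := by
          apply Finset.sum_le_sum
          intro i hi
          exact hgrad i (hmem i hi) x
      _ = ((Finset.Icc k L).card : ℝ) * L1 := by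
          rw [Finset.sum_const, nsmul_eq_mul]
      _ = a * L1 := by rw [hcard]
  have hab : 0 ≤ a⁻¹ - b⁻¹ := by
    have : b⁻¹ ≤ a⁻¹ := by
      apply inv_anti₀ hapos
      simp only [ha, hb]; linarith
    linarith
  have key : ‖a⁻¹ • (∑ i ∈ Finset.Icc k L, g i x')
        - b⁻¹ • (∑ i ∈ Finset.Icc (k-1) L, g i x)‖
      ≤ L2 * (R / K) + L1 / b + L1 / b := by
    rw [hdecomp]
    calc ‖a⁻¹ • (∑ i ∈ Finset.Icc k L, (g i x' - g i x))
            + (a⁻¹ - b⁻¹) • (∑ i ∈ Finset.Icc k L, g i x)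
            - b⁻¹ • g (k-1) x‖
        ≤ ‖a⁻¹ • (∑ i ∈ Finset.Icc k L, (g i x' - g i x))
            + (a⁻¹ - b⁻¹) • (∑ i ∈ Finset.Icc k L, g i x)‖
          + ‖b⁻¹ • g (k-1) x‖ := norm_sub_le _ _
      _ ≤ ‖a⁻¹ • (∑ i ∈ Finset.Icc k L, (g i x' - g i x))‖
          + ‖(a⁻¹ - b⁻¹) • (∑ i ∈ Finset.Icc k L, g i x)‖
          + ‖b⁻¹ • g (k-1) x‖ := by
            gcongr
            exact norm_add_le _ _
      _ ≤ L2 * (R / K) + L1 / b + L1 / b := by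
          gcongr ?_ + ?_ + ?_
          · rw [norm_smul, Real.norm_eq_abs, abs_of_nonneg (by positivity)]
            calc a⁻¹ * ‖∑ i ∈ Finset.Icc k L, (g i x' - g i x)‖
                ≤ a⁻¹ * (a * (L2 * (R / K))) := by
                  exact mul_le_mul_of_nonneg_left hsum1 (by positivity)
              _ = L2 * (R / K) := by field_simp
          · rw [norm_smul, Real.norm_eq_abs, abs_of_nonneg hab]
            calc (a⁻¹ - b⁻¹) * ‖∑ i ∈ Finset.Icc k L, g i x‖
                ≤ (a⁻¹ - b⁻¹) * (a * L1) := mul_le_mul_of_nonneg_left hsum2 hab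
              _ = L1 / b := by
                  have hba : b = a + 1 := by simp only [ha, hb]; ring
                  rw [hba]
                  have h0 : a + 1 ≠ 0 := by positivity
                  have h0' : a ≠ 0 := ne_of_gt hapos
                  field_simp
                  ring
          · rw [norm_smul, Real.norm_eq_abs, abs_of_nonneg (by positivity)]
            have hmem' : k - 1 ∈ Finset.Icc (k-1) L := by
              simp only [Finset.mem_Icc]; omega
            calc b⁻¹ * ‖g (k-1) x‖ ≤ b⁻¹ * L1 :=
                  mul_le_mul_of_nonneg_left (hgrad _ hmem' x) (by positivity)
              _ = L1 / b := by rw [div_eq_inv_mul]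
  calc ‖a⁻¹ • (∑ i ∈ Finset.Icc k L, g i x')
        - b⁻¹ • (∑ i ∈ Finset.Icc (k-1) L, g i x)‖
      ≤ L2 * (R / K) + L1 / b + L1 / b := key
    _ ≤ 3 * L2 * R / ((k:ℝ)+2) + L1 / ((k:ℝ)+2) + L1 / ((k:ℝ)+2) := by
        gcongr ?_ + ?_ + ?_
        · rw [← mul_div_assoc, div_le_div_iff₀ hKpos hk2pos]
          nlinarith [mul_nonneg hL2 hR, hkKr, hKr]
        · exact div_le_div_of_nonneg_left hL1 hk2pos hbk
        · exact div_le_div_of_nonneg_left hL1 hk2pos hbk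
    _ = (3 * L2 * R + 2 * L1) / ((k : ℝ) + 2) := by ring
end

section
/- Let K ≥ 2 be an even natural number, let σ², G, A ≥ 0 be reals, and define step sizes ρ_k := 2/(k+3)^{2/3} for 1 ≤ k ≤ K/2+1 and ρ_k := 1.5/(K−k+2)^{2/3} for K/2+2 ≤ k ≤ K. Let Δ_1, …, Δ_K be nonnegative reals satisfying Δ_1 ≤ A and, for every 2 ≤ k ≤ K, Δ_k ≤ ρ_k²·σ² + (G/(K−k+2)²)·(1 + 2/ρ_k) + (1 − ρ_k)·Δ_{k−1}. Set N := max{ 5^{2/3}·A, 4σ² + 32G, 2.25σ² + 7G/3 }. Then Δ_k ≤ N/(k+4)^{2/3} for every 1 ≤ k ≤ K/2, and Δ_k ≤ N/(K−k+1)^{2/3} for every K/2+1 ≤ k ≤ K. -/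
open Real

lemma vrb_cube (y : ℝ) (hy : 0 ≤ y) : (y ^ ((2:ℝ)/3)) ^ (3:ℕ) = y ^ (2:ℕ) := by
  rw [← Real.rpow_natCast (y ^ ((2:ℝ)/3)) 3, ← Real.rpow_mul hy]
  norm_num

lemma vrb_sub (x : ℝ) (hx : 2 ≤ x) :
    (x+4) ^ ((2:ℝ)/3) ≤ (x+3) ^ ((2:ℝ)/3) + 1 := by
  set t := (x+3) ^ ((2:ℝ)/3) with ht
  set T := (x+4) ^ ((2:ℝ)/3) with hT
  have ht0 : 0 < t := Real.rpow_pos_of_pos (by linarith) _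
  have hT0 : 0 < T := Real.rpow_pos_of_pos (by linarith) _
  have h3 : t ^ (3:ℕ) = (x+3) ^ (2:ℕ) := vrb_cube _ (by linarith)
  have h3T : T ^ (3:ℕ) = (x+4) ^ (2:ℕ) := vrb_cube _ (by linarith)
  have hsq : x + 3 ≤ t ^ (2:ℕ) := by
    have : (x+3) ^ (1:ℝ) ≤ (x+3) ^ ((4:ℝ)/3) :=
      Real.rpow_le_rpow_of_exponent_le (by linarith) (by norm_num)
    rw [Real.rpow_one] at this
    have e : t ^ (2:ℕ) = (x+3) ^ ((4:ℝ)/3) := by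
      rw [ht, ← Real.rpow_natCast ((x+3) ^ ((2:ℝ)/3)) 2, ← Real.rpow_mul (by linarith)]
      norm_num
    linarith [e ▸ this]
  have hcube : T ^ (3:ℕ) ≤ (t+1) ^ (3:ℕ) := by
    rw [h3T]
    nlinarith [ht0, hsq, h3]
  exact le_of_pow_le_pow_left₀ (by norm_num) (by linarith) hcube

set_option maxHeartbeats 1000000 in
lemma vrb_aux1 (σ2 G N x y D : ℝ) (hσ : 0 ≤ σ2) (hG : 0 ≤ G)
    (hN : 4*σ2 + 32*G ≤ N) (hx : 2 ≤ x) (hy : x ≤ y) (hD0 : 0 ≤ D)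
    (hD : D ≤ N / (x+3) ^ ((2:ℝ)/3)) :
    (2 / (x+3) ^ ((2:ℝ)/3)) ^ 2 * σ2
      + (G / y^2) * (1 + 2 / (2 / (x+3) ^ ((2:ℝ)/3)))
      + (1 - 2 / (x+3) ^ ((2:ℝ)/3)) * D ≤ N / (x+4) ^ ((2:ℝ)/3) := by
  have hN0 : (0:ℝ) ≤ N := by linarith
  set t := (x+3) ^ ((2:ℝ)/3) with htdef
  set T := (x+4) ^ ((2:ℝ)/3) with hTdef
  have ht0 : 0 < t := Real.rpow_pos_of_pos (by linarith) _
  have hT0 : 0 < T := Real.rpow_pos_of_pos (by linarith) _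
  have h3 : t ^ (3:ℕ) = (x+3) ^ (2:ℕ) := vrb_cube _ (by linarith)
  have h2t : 2 < t := by
    by_contra h
    push_neg at h
    have : t ^ (3:ℕ) ≤ 2 ^ (3:ℕ) := pow_le_pow_left₀ ht0.le h 3
    nlinarith [h3]
  have hT : T ≤ t + 1 := vrb_sub x hx
  have hy0 : 0 < y := by linarith
  -- simplify the inner expressions
  have e1 : 2 / (2 / t) = t := by field_simp
  have e2 : (2 / t) ^ 2 = 4 / t ^ 2 := by rw [div_pow]; norm_num
  rw [e1, e2]
  -- step 1 : replace D
  have hstep : (1 - 2/t) * D ≤ (1 - 2/t) * (N/t) :=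
    mul_le_mul_of_nonneg_left hD (by rw [sub_nonneg, div_le_one ht0]; linarith)
  have erw : (1 - 2/t) * (N/t) = N/t - 2*(N/t^2) := by field_simp
  -- step 2 : G term
  have hG1 : G / y^2 * (1 + t) ≤ G / x^2 * (1 + t) := by
    have : G / y^2 ≤ G / x^2 := by
      apply div_le_div_of_nonneg_left hG (by positivity)
      nlinarith
    apply mul_le_mul_of_nonneg_right this (by linarith)
  have hG2 : G / x^2 * (1 + t) ≤ 32 * G / t^2 := by
    rw [div_mul_eq_mul_div, div_le_div_iff₀ (by positivity) (by positivity)]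
    nlinarith [h3, mul_nonneg hG (sq_nonneg (x-2)), mul_nonneg hG (sq_nonneg x),
      mul_nonneg (mul_nonneg hG ht0.le) (sq_nonneg (x-2)), sq_nonneg x,
      mul_nonneg hG (mul_nonneg ht0.le ht0.le)]
  -- step 3 : combine σ2 and G over t^2
  have hkey : 4 / t^2 * σ2 + 32 * G / t^2 ≤ N / t^2 := by
    rw [div_mul_eq_mul_div, ← add_div]
    apply div_le_div_of_nonneg_right ?_ (by positivity)
    linarith
  -- step 4
  have hfin1 : N/t - N/t^2 ≤ N/(t+1) := by
    rw [div_sub_div _ _ (by positivity) (by positivity), div_le_div_iff₀ (by positivity) (by positivity)]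
    nlinarith [hN0, ht0]
  have hfin2 : N/(t+1) ≤ N/T := div_le_div_of_nonneg_left hN0 hT0 hT
  linarith

set_option maxHeartbeats 1000000 in
lemma vrb_aux2 (σ2 G N s D : ℝ) (hσ : 0 ≤ σ2) (hG : 0 ≤ G)
    (hN : 2.25*σ2 + 7*G/3 ≤ N) (hs : 2 ≤ s) (hD0 : 0 ≤ D)
    (hD : D ≤ N / s ^ ((2:ℝ)/3)) :
    (1.5 / s ^ ((2:ℝ)/3)) ^ 2 * σ2
      + (G / s^2) * (1 + 2 / (1.5 / s ^ ((2:ℝ)/3)))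
      + (1 - 1.5 / s ^ ((2:ℝ)/3)) * D ≤ N / (s-1) ^ ((2:ℝ)/3) := by
  have hN0 : (0:ℝ) ≤ N := by linarith
  set u := s ^ ((2:ℝ)/3) with hudef
  set v := (s-1) ^ ((2:ℝ)/3) with hvdef
  have hu0 : 0 < u := Real.rpow_pos_of_pos (by linarith) _
  have hv0 : 0 < v := Real.rpow_pos_of_pos (by linarith) _
  have h3 : u ^ (3:ℕ) = s ^ (2:ℕ) := vrb_cube _ (by linarith)
  have h15 : 1.5 ≤ u := by
    by_contra h
    push_neg at h
    have : u ^ (3:ℕ) ≤ (1.5:ℝ) ^ (3:ℕ) := pow_le_pow_left₀ hu0.le h.le 3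
    nlinarith [h3]
  have hvu : v ≤ u := by
    rw [hudef, hvdef]
    exact Real.rpow_le_rpow (by linarith) (by linarith) (by norm_num)
  have e1 : 2 / (1.5 / u) = 4/3 * u := by
    rw [div_div_eq_mul_div]
    norm_num
    ring
  have e2 : (1.5 / u) ^ 2 = 2.25 / u ^ 2 := by rw [div_pow]; norm_num
  rw [e1, e2]
  have hstep : (1 - 1.5/u) * D ≤ (1 - 1.5/u) * (N/u) :=
    mul_le_mul_of_nonneg_left hD (by rw [sub_nonneg, div_le_one hu0]; linarith)
  have erw : (1 - 1.5/u) * (N/u) = N/u - 1.5*(N/u^2) := by field_simp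
  have hkey : 2.25 / u^2 * σ2 + G / s^2 * (1 + 4/3*u) ≤ 1.5*(N/u^2) := by
    rw [← h3]
    have hnum : 2.25 * σ2 * u + G * (1 + 4/3*u) ≤ 1.5 * N * u := by
      nlinarith [mul_le_mul_of_nonneg_left h15 hG, mul_le_mul_of_nonneg_right hN hu0.le,
        mul_nonneg hσ hu0.le, mul_nonneg hG hu0.le]
    calc 2.25 / u^2 * σ2 + G / u^3 * (1 + 4/3*u)
        = (2.25 * σ2 * u + G * (1 + 4/3*u)) / u^3 := by field_simp
      _ ≤ (1.5 * N * u) / u^3 := by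
          apply div_le_div_of_nonneg_right hnum (by positivity)
      _ = 1.5*(N/u^2) := by field_simp
  have hfin : N/u ≤ N/v := div_le_div_of_nonneg_left hN0 hv0 hvu
  linarith

theorem variance_recursion_inverted_bell_bound
    (K : ℕ) (hK : 2 ≤ K) (hKeven : Even K)
    (σ2 G A : ℝ) (hσ2 : 0 ≤ σ2) (hG : 0 ≤ G) (hA : 0 ≤ A)
    (Δ : ℕ → ℝ)
    (hΔnonneg : ∀ k, 1 ≤ k → k ≤ K → 0 ≤ Δ k)
    (hΔ1 : Δ 1 ≤ A)
    (hrec1 : ∀ k, 2 ≤ k → k ≤ K / 2 + 1 →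
      Δ k ≤ (2 / ((k : ℝ) + 3) ^ ((2 : ℝ) / 3)) ^ 2 * σ2
        + (G / ((K : ℝ) - k + 2) ^ 2) * (1 + 2 / (2 / ((k : ℝ) + 3) ^ ((2 : ℝ) / 3)))
        + (1 - 2 / ((k : ℝ) + 3) ^ ((2 : ℝ) / 3)) * Δ (k - 1))
    (hrec2 : ∀ k, K / 2 + 2 ≤ k → k ≤ K →
      Δ k ≤ (1.5 / ((K : ℝ) - k + 2) ^ ((2 : ℝ) / 3)) ^ 2 * σ2
        + (G / ((K : ℝ) - k + 2) ^ 2) * (1 + 2 / (1.5 / ((K : ℝ) - k + 2) ^ ((2 : ℝ) / 3)))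
        + (1 - 1.5 / ((K : ℝ) - k + 2) ^ ((2 : ℝ) / 3)) * Δ (k - 1))
    (N : ℝ)
    (hN : N = max (max ((5 : ℝ) ^ ((2 : ℝ) / 3) * A) (4 * σ2 + 32 * G))
      (2.25 * σ2 + 7 * G / 3)) :
    (∀ k, 1 ≤ k → k ≤ K / 2 → Δ k ≤ N / ((k : ℝ) + 4) ^ ((2 : ℝ) / 3)) ∧
    (∀ k, K / 2 + 1 ≤ k → k ≤ K → Δ k ≤ N / ((K : ℝ) - k + 1) ^ ((2 : ℝ) / 3)) := by
  have hm1 : 1 ≤ K / 2 := by omega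
  have hKm : K = 2 * (K / 2) := by
    obtain ⟨r, hr⟩ := hKeven; omega
  have hNA : (5 : ℝ) ^ ((2 : ℝ) / 3) * A ≤ N := hN ▸ le_trans (le_max_left _ _) (le_max_left _ _)
  have hN1 : 4 * σ2 + 32 * G ≤ N := hN ▸ le_trans (le_max_right _ _) (le_max_left _ _)
  have hN2 : 2.25 * σ2 + 7 * G / 3 ≤ N := hN ▸ le_max_right _ _
  have hN0 : (0:ℝ) ≤ N := by linarith
  have main : ∀ n : ℕ,
      ((1 ≤ n ∧ n ≤ K / 2 + 1) → Δ n ≤ N / ((n : ℝ) + 4) ^ ((2 : ℝ) / 3)) ∧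
      ((K / 2 + 1 ≤ n ∧ n ≤ K) → Δ n ≤ N / ((K : ℝ) - n + 1) ^ ((2 : ℝ) / 3)) := by
    intro n
    induction n with
    | zero =>
      constructor
      · rintro ⟨h, -⟩; omega
      · rintro ⟨h, -⟩; omega
    | succ n ih =>
      have partA : (1 ≤ n + 1 ∧ n + 1 ≤ K / 2 + 1) →
          Δ (n+1) ≤ N / (((n:ℝ) + 1) + 4) ^ ((2 : ℝ) / 3) := by
        rintro ⟨-, h2⟩
        rcases Nat.eq_zero_or_pos n with h0 | h1
        · subst h0
          have h5 : (0:ℝ) < (5 : ℝ) ^ ((2 : ℝ) / 3) := Real.rpow_pos_of_pos (by norm_num) _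
          rw [show ((0:ℕ):ℝ) + 1 + 4 = 5 by norm_num, le_div_iff₀ h5]
          nlinarith [mul_le_mul_of_nonneg_right hΔ1 h5.le]
        · have hrec := hrec1 (n+1) (by omega) h2
          simp only [Nat.add_sub_cancel] at hrec
          push_cast at hrec
          have ihA := ih.1 ⟨h1, by omega⟩
          have hD0 := hΔnonneg n h1 (by omega)
          have hD' : Δ n ≤ N / (((n:ℝ) + 1) + 3) ^ ((2 : ℝ) / 3) := by
            rw [show ((n:ℝ) + 1 + 3) = (n:ℝ) + 4 by ring]; exact ihA
          refine le_trans hrec (vrb_aux1 σ2 G N ((n:ℝ)+1) ((K:ℝ) - ((n:ℝ)+1) + 2) (Δ n)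
            hσ2 hG hN1 ?_ ?_ hD0 hD')
          · have : (1:ℝ) ≤ (n:ℝ) := by exact_mod_cast h1
            linarith
          · have h2K : 2 * (n + 1) ≤ K + 2 := by omega
            have : ((2 * (n + 1) : ℕ) : ℝ) ≤ ((K + 2 : ℕ) : ℝ) := by exact_mod_cast h2K
            push_cast at this
            linarith
      have partB : (K / 2 + 1 ≤ n + 1 ∧ n + 1 ≤ K) →
          Δ (n+1) ≤ N / ((K:ℝ) - ((n:ℝ)+1) + 1) ^ ((2 : ℝ) / 3) := by
        rintro ⟨h1, h2⟩
        rcases eq_or_lt_of_le h1 with heq | hlt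
        · -- n + 1 = K/2 + 1
          have hn : n = K / 2 := by omega
          have hAres := partA ⟨by omega, by omega⟩
          have hKR : (K:ℝ) = 2 * ((K/2 : ℕ) : ℝ) := by exact_mod_cast hKm
          have hmR : (1:ℝ) ≤ ((K/2 : ℕ) : ℝ) := by exact_mod_cast hm1
          have hrw : (K:ℝ) - ((n:ℝ)+1) + 1 = ((K/2 : ℕ) : ℝ) := by
            subst hn; rw [hKR]; ring
          rw [hrw]
          refine le_trans hAres ?_
          apply div_le_div_of_nonneg_left hN0 (Real.rpow_pos_of_pos (by linarith) _)
          apply Real.rpow_le_rpow (by linarith) ?_ (by norm_num)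
          subst hn; linarith
        · -- K/2 + 2 ≤ n + 1
          have hrec := hrec2 (n+1) (by omega) h2
          simp only [Nat.add_sub_cancel] at hrec
          push_cast at hrec
          have ihB := ih.2 ⟨by omega, by omega⟩
          have hD0 := hΔnonneg n (by omega) (by omega)
          have hD' : Δ n ≤ N / ((K:ℝ) - ((n:ℝ)+1) + 2) ^ ((2 : ℝ) / 3) := by
            rw [show ((K:ℝ) - ((n:ℝ)+1) + 2) = (K:ℝ) - (n:ℝ) + 1 by ring]; exact ihB
          have hs : (2:ℝ) ≤ (K:ℝ) - ((n:ℝ)+1) + 2 := by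
            have : ((n:ℝ) + 1) ≤ (K:ℝ) := by exact_mod_cast h2
            linarith
          have := vrb_aux2 σ2 G N ((K:ℝ) - ((n:ℝ)+1) + 2) (Δ n) hσ2 hG hN2 hs hD0 hD'
          rw [show ((K:ℝ) - ((n:ℝ)+1) + 1) = ((K:ℝ) - ((n:ℝ)+1) + 2) - 1 by ring]
          exact le_trans hrec this
      constructor
      · intro h
        have := partA h
        push_cast
        exact this
      · intro h
        have := partB h
        push_cast
        exact this
  constructor
  · intro k hk1 hk2
    exact (main k).1 ⟨hk1, by omega⟩
  · intro k hk1 hk2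
    exact (main k).2 ⟨hk1, hk2⟩
end

section
/- Let K ≥ 1 be a natural number, let σ², G ≥ 0 be reals, and define step sizes ρ_k := 2/(k+2)^{2/3} for 1 ≤ k ≤ K. Let Δ_1, …, Δ_K be nonnegative reals satisfying Δ_1 ≤ 2σ² + G and, for every 2 ≤ k ≤ K, Δ_k ≤ ρ_k²·σ² + (G/(k+2)²)·(1 + 2/ρ_k) + (1 − ρ_k)·Δ_{k−1}. Set N₀ := 4^{2/3}·(2σ² + G). Then Δ_k ≤ N₀/(k+3)^{2/3} for every 1 ≤ k ≤ K. -/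
open Real

lemma poly_ineq (σ2 G u v c : ℝ) (hσ2 : 0 ≤ σ2) (hG : 0 ≤ G)
    (hupos : 0 < u) (hvpos : 0 < v) (hcpos : 0 < c)
    (hc3 : c ^ 3 = 4) (hcu : c ≤ u) (huv : u ≤ v) (hc1 : 1 ≤ c)
    (hv3u : v ^ 3 = u ^ 3 + 1) :
    (2 / u ^ 2) ^ 2 * σ2 + G / u ^ 6 * (1 + 2 / (2 / u ^ 2))
      + (1 - 2 / u ^ 2) * (c ^ 2 * (2 * σ2 + G) / u ^ 2)
    ≤ c ^ 2 * (2 * σ2 + G) / v ^ 2 := by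
  have hu1 : 1 ≤ u := le_trans hc1 hcu
  have keyP : u ^ 3 * v ^ 2 - u ^ 5 ≤ v ^ 2 := by
    have h1 : u * v ^ 2 ≤ u ^ 3 + 1 := by
      have := mul_le_mul_of_nonneg_left huv (mul_nonneg hupos.le hvpos.le)
      nlinarith [this]
    have h2 : (1:ℝ) ≤ u ^ 3 := one_le_pow₀ hu1
    have h3 : (u*v^2)*(u^3-1) ≤ (u^3+1)*(u^3-1) :=
      mul_le_mul_of_nonneg_right h1 (by linarith)
    have h4 : u * (u^3*v^2 - u^5 - v^2) ≤ -1 := by nlinarith [h3]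
    nlinarith [h4, hupos]
  have hc2 : c ≤ 2 := by nlinarith [sq_nonneg (c-2), sq_nonneg (c+2)]
  have hcc : c ^ 2 ≤ (2 * c ^ 2 - 2) * u := by
    have h1 : (2 * c ^ 2 - 2) * c ≤ (2 * c ^ 2 - 2) * u :=
      mul_le_mul_of_nonneg_left hcu (by nlinarith)
    nlinarith
  have keyPu : u ^ 4 * v ^ 2 - u ^ 6 ≤ u * v ^ 2 := by
    nlinarith [mul_le_mul_of_nonneg_left keyP hupos.le]
  have step : c ^ 2 * (u ^ 4 * v ^ 2 - u ^ 6) ≤ (2 * c ^ 2 - 2) * (u ^ 2 * v ^ 2) := by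
    calc c ^ 2 * (u ^ 4 * v ^ 2 - u ^ 6) ≤ c ^ 2 * (u * v ^ 2) :=
          mul_le_mul_of_nonneg_left keyPu (by positivity)
      _ ≤ ((2 * c ^ 2 - 2) * u) * (u * v ^ 2) :=
          mul_le_mul_of_nonneg_right hcc (by positivity)
      _ = (2 * c ^ 2 - 2) * (u ^ 2 * v ^ 2) := by ring
  have hM : (0:ℝ) ≤ 2 * σ2 + G := by linarith
  have hGv : G * v ^ 2 ≤ G * (u ^ 2 * v ^ 2) := by
    apply mul_le_mul_of_nonneg_left _ hG
    nlinarith [mul_nonneg (by nlinarith : (0:ℝ) ≤ u^2 - 1) (sq_nonneg v)]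
  have main : 4*σ2*u^2*v^2 + G*v^2 + G*u^2*v^2 + c^2*(2*σ2+G)*(u^2-2)*u^2*v^2
      ≤ c^2*(2*σ2+G)*u^6 := by
    nlinarith [mul_le_mul_of_nonneg_left step hM, hGv]
  have hident : c^2*(2*σ2+G)/v^2 - ((2 / u ^ 2) ^ 2 * σ2 + G / u ^ 6 * (1 + 2 / (2 / u ^ 2))
        + (1 - 2 / u ^ 2) * (c ^ 2 * (2 * σ2 + G) / u ^ 2))
      = (c^2*(2*σ2+G)*u^6 - (4*σ2*u^2*v^2 + G*v^2 + G*u^2*v^2 + c^2*(2*σ2+G)*(u^2-2)*u^2*v^2))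
        / (u^6 * v^2) := by
    field_simp
    ring
  have hfinal := div_nonneg (sub_nonneg.mpr main) (by positivity : (0:ℝ) ≤ u^6 * v^2)
  linarith [hident ▸ hfinal]

lemma aux_ineq (σ2 G : ℝ) (hσ2 : 0 ≤ σ2) (hG : 0 ≤ G) (x : ℝ) (hx : 4 ≤ x) :
    (2 / x ^ ((2:ℝ)/3)) ^ 2 * σ2
      + (G / x ^ 2) * (1 + 2 / (2 / x ^ ((2:ℝ)/3)))
      + (1 - 2 / x ^ ((2:ℝ)/3)) * ((4:ℝ) ^ ((2:ℝ)/3) * (2*σ2+G) / x ^ ((2:ℝ)/3))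
    ≤ (4:ℝ) ^ ((2:ℝ)/3) * (2*σ2+G) / (x+1) ^ ((2:ℝ)/3) := by
  have hx0 : (0:ℝ) < x := by linarith
  have hx10 : (0:ℝ) < x + 1 := by linarith
  have hupos : 0 < x ^ ((1:ℝ)/3) := Real.rpow_pos_of_pos hx0 _
  have hvpos : 0 < (x+1) ^ ((1:ℝ)/3) := Real.rpow_pos_of_pos hx10 _
  have hcpos : 0 < (4:ℝ) ^ ((1:ℝ)/3) := Real.rpow_pos_of_pos (by norm_num) _
  have hu3 : (x ^ ((1:ℝ)/3)) ^ 3 = x := by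
    rw [← Real.rpow_natCast (x ^ ((1:ℝ)/3)) 3, ← Real.rpow_mul hx0.le]; norm_num
  have hv3 : ((x+1) ^ ((1:ℝ)/3)) ^ 3 = x + 1 := by
    rw [← Real.rpow_natCast ((x+1) ^ ((1:ℝ)/3)) 3, ← Real.rpow_mul hx10.le]; norm_num
  have hc3 : ((4:ℝ) ^ ((1:ℝ)/3)) ^ 3 = 4 := by
    rw [← Real.rpow_natCast ((4:ℝ) ^ ((1:ℝ)/3)) 3, ← Real.rpow_mul (by norm_num : (0:ℝ) ≤ 4)]; norm_num
  have hx23 : x ^ ((2:ℝ)/3) = (x ^ ((1:ℝ)/3)) ^ 2 := by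
    rw [← Real.rpow_natCast (x ^ ((1:ℝ)/3)) 2, ← Real.rpow_mul hx0.le]; norm_num
  have hx123 : (x+1) ^ ((2:ℝ)/3) = ((x+1) ^ ((1:ℝ)/3)) ^ 2 := by
    rw [← Real.rpow_natCast ((x+1) ^ ((1:ℝ)/3)) 2, ← Real.rpow_mul hx10.le]; norm_num
  have h423 : (4:ℝ) ^ ((2:ℝ)/3) = ((4:ℝ) ^ ((1:ℝ)/3)) ^ 2 := by
    rw [← Real.rpow_natCast ((4:ℝ) ^ ((1:ℝ)/3)) 2, ← Real.rpow_mul (by norm_num : (0:ℝ) ≤ 4)]; norm_num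
  have hx2 : x ^ 2 = (x ^ ((1:ℝ)/3)) ^ 6 := by rw [show ((x ^ ((1:ℝ)/3)) ^ 6 = ((x ^ ((1:ℝ)/3)) ^ 3) ^ 2) from by ring, hu3]
  have hcu : (4:ℝ) ^ ((1:ℝ)/3) ≤ x ^ ((1:ℝ)/3) :=
    Real.rpow_le_rpow (by norm_num) hx (by norm_num)
  have hc1 : 1 ≤ (4:ℝ) ^ ((1:ℝ)/3) := by
    nlinarith [hc3, hcpos, sq_nonneg ((4:ℝ) ^ ((1:ℝ)/3) - 1), sq_nonneg ((4:ℝ) ^ ((1:ℝ)/3) + 1)]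
  have huv : x ^ ((1:ℝ)/3) ≤ (x+1) ^ ((1:ℝ)/3) :=
    Real.rpow_le_rpow hx0.le (by linarith) (by norm_num)
  have hv3u : ((x+1) ^ ((1:ℝ)/3)) ^ 3 = (x ^ ((1:ℝ)/3)) ^ 3 + 1 := by rw [hv3, hu3]
  rw [hx23, hx123, h423, hx2]
  exact poly_ineq σ2 G _ _ _ hσ2 hG hupos hvpos hcpos hc3 hcu huv hc1 hv3u


theorem variance_recursion_decreasing_bound
    (K : ℕ) (hK : 1 ≤ K)
    (σ2 G : ℝ) (hσ2 : 0 ≤ σ2) (hG : 0 ≤ G)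
    (Δ : ℕ → ℝ)
    (hΔnonneg : ∀ k, 1 ≤ k → k ≤ K → 0 ≤ Δ k)
    (hΔ1 : Δ 1 ≤ 2 * σ2 + G)
    (hrec : ∀ k, 2 ≤ k → k ≤ K →
      Δ k ≤ (2 / ((k : ℝ) + 2) ^ ((2 : ℝ) / 3)) ^ 2 * σ2
        + (G / ((k : ℝ) + 2) ^ 2) * (1 + 2 / (2 / ((k : ℝ) + 2) ^ ((2 : ℝ) / 3)))
        + (1 - 2 / ((k : ℝ) + 2) ^ ((2 : ℝ) / 3)) * Δ (k - 1))
    (N0 : ℝ) (hN0 : N0 = (4 : ℝ) ^ ((2 : ℝ) / 3) * (2 * σ2 + G)) :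
    ∀ k, 1 ≤ k → k ≤ K → Δ k ≤ N0 / ((k : ℝ) + 3) ^ ((2 : ℝ) / 3) := by
  intro k hk
  induction k, hk using Nat.le_induction with
  | base =>
    intro _
    have h4 : ((1:ℕ):ℝ) + 3 = 4 := by norm_num
    rw [h4, hN0, mul_comm, mul_div_assoc, div_self (by positivity : (4:ℝ)^((2:ℝ)/3) ≠ 0), mul_one]
    exact hΔ1
  | succ n hn ih =>
    intro hnK
    have hrecn := hrec (n+1) (by omega) hnK
    simp only [Nat.add_sub_cancel] at hrecn
    have ihn := ih (by omega)
    push_cast at hrecn ⊢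
    have hx4 : (4:ℝ) ≤ (n:ℝ) + 3 := by
      have : (1:ℝ) ≤ (n:ℝ) := by exact_mod_cast hn
      linarith
    have e1 : (n:ℝ) + 1 + 2 = (n:ℝ) + 3 := by ring
    have e2 : (n:ℝ) + 1 + 3 = ((n:ℝ) + 3) + 1 := by ring
    rw [e1] at hrecn
    rw [e2]
    set x := (n:ℝ) + 3 with hxdef
    -- 2 ≤ x ^ (2/3), so 1 - 2 / x^(2/3) ≥ 0
    have hxpos : (0:ℝ) < x := by linarith
    have h2x : (2:ℝ) ≤ x ^ ((2:ℝ)/3) := by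
      have ha : (4:ℝ) ^ ((1:ℝ)/2) ≤ (4:ℝ) ^ ((2:ℝ)/3) :=
        Real.rpow_le_rpow_of_exponent_le (by norm_num) (by norm_num)
      have hb : (4:ℝ) ^ ((2:ℝ)/3) ≤ x ^ ((2:ℝ)/3) :=
        Real.rpow_le_rpow (by norm_num) hx4 (by norm_num)
      have hc : (4:ℝ) ^ ((1:ℝ)/2) = 2 := by
        rw [show (4:ℝ) = 2^(2:ℕ) by norm_num, ← Real.rpow_natCast 2 2,
          ← Real.rpow_mul (by norm_num : (0:ℝ) ≤ 2)]
        norm_num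
      linarith
    have hρ : 0 ≤ 1 - 2 / x ^ ((2:ℝ)/3) := by
      have : 2 / x ^ ((2:ℝ)/3) ≤ 1 := by
        rw [div_le_one (by positivity)]; linarith
      linarith
    have hmono : (1 - 2 / x ^ ((2:ℝ)/3)) * Δ n ≤
        (1 - 2 / x ^ ((2:ℝ)/3)) * (N0 / x ^ ((2:ℝ)/3)) :=
      mul_le_mul_of_nonneg_left ihn hρ
    calc Δ (n+1) ≤ (2 / x ^ ((2:ℝ)/3)) ^ 2 * σ2
          + (G / x ^ 2) * (1 + 2 / (2 / x ^ ((2:ℝ)/3)))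
          + (1 - 2 / x ^ ((2:ℝ)/3)) * Δ n := hrecn
      _ ≤ (2 / x ^ ((2:ℝ)/3)) ^ 2 * σ2
          + (G / x ^ 2) * (1 + 2 / (2 / x ^ ((2:ℝ)/3)))
          + (1 - 2 / x ^ ((2:ℝ)/3)) * (N0 / x ^ ((2:ℝ)/3)) := by linarith
      _ ≤ N0 / (x + 1) ^ ((2:ℝ)/3) := by
          rw [hN0]
          exact aux_ineq σ2 G hσ2 hG x hx4
end

section
/- Let Ω = {1, …, d} and let f : 2^Ω → ℝ be a submodular set function with |f(S)| ≤ M for every S ⊆ Ω. Then its multilinear extension F : [0,1]^d → ℝ is (2M√d)-Lipschitz with respect to the Euclidean norm: |F(x) − F(y)| ≤ 2M√d·‖x − y‖ for all x, y ∈ [0,1]^d. -/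
open Finset

/-- The multilinear extension of a set function `f : 2^{[d]} → ℝ`:
`F(x) = Σ_{S ⊆ [d]} f(S) · Π_{i ∈ S} x_i · Π_{j ∉ S} (1 − x_j)`. -/
noncomputable def multilinearExt {d : ℕ} (f : Finset (Fin d) → ℝ)
    (x : EuclideanSpace ℝ (Fin d)) : ℝ :=
  ∑ S : Finset (Fin d), f S * (∏ i ∈ S, x i) * ∏ j ∈ Sᶜ, (1 - x j)

/-!
The multilinear extension is affine in each coordinate, and on the cube it is an average of
values of `f`, hence bounded by `M`. So changing one coordinate of a point of the cube by `δ`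
changes `F` by `δ` times a difference of two values of `F` on the cube, i.e. by at most `2M|δ|`.
Moving from `x` to `y` one coordinate at a time gives `|F x - F y| ≤ 2M ‖x - y‖₁`, and
Cauchy–Schwarz gives `‖v‖₁ ≤ √d ‖v‖₂`.
-/

theorem sum_prod_mul_prod_compl_one_sub {ι : Type*} [Fintype ι] [DecidableEq ι] (x : ι → ℝ) :
    ∑ S : Finset ι, (∏ i ∈ S, x i) * ∏ j ∈ Sᶜ, (1 - x j) = 1 := by
  simpa [powerset_univ, compl_eq_univ_sdiff] using (prod_add x (fun i => 1 - x i) univ).symm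

theorem EuclideanSpace.sum_abs_le_sqrt_card_mul_norm {ι : Type*} [Fintype ι]
    (v : EuclideanSpace ℝ ι) : ∑ i, |v i| ≤ √(Fintype.card ι) * ‖v‖ := by
  simpa [EuclideanSpace.norm_eq, sq_abs] using
    Real.sum_mul_le_sqrt_mul_sqrt univ (fun _ => 1) (fun i => |v i|)

theorem multilinearExt_update {d : ℕ} (f : Finset (Fin d) → ℝ) (z : Fin d → ℝ) (i : Fin d)
    (t : ℝ) :
    multilinearExt f (WithLp.toLp 2 (Function.update z i t)) =
      (1 - t) * multilinearExt f (WithLp.toLp 2 (Function.update z i 0)) +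
        t * multilinearExt f (WithLp.toLp 2 (Function.update z i 1)) := by
  simp only [multilinearExt, mul_sum, ← sum_add_distrib]
  refine sum_congr rfl fun S _ => ?_
  have h (s : ℝ) (j : Fin d) :
      1 - Function.update z i s j = Function.update (fun j => 1 - z j) i (1 - s) j := by
    by_cases hj : j = i <;> simp [hj]
  simp only [h]
  by_cases hi : i ∈ S
  · simp [prod_update_of_mem hi, prod_update_of_notMem (notMem_compl.2 hi)]; ring
  · simp [prod_update_of_notMem hi, prod_update_of_mem (mem_compl.2 hi)]; ring

theorem abs_multilinearExt_le {d : ℕ} {f : Finset (Fin d) → ℝ} {M : ℝ}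
    (hbound : ∀ S, |f S| ≤ M) {x : EuclideanSpace ℝ (Fin d)}
    (hx : ∀ i, x i ∈ Set.Icc (0 : ℝ) 1) : |multilinearExt f x| ≤ M := by
  have hw (S : Finset (Fin d)) : 0 ≤ (∏ i ∈ S, x i) * ∏ j ∈ Sᶜ, (1 - x j) :=
    mul_nonneg (prod_nonneg fun i _ => (hx i).1) (prod_nonneg fun j _ => sub_nonneg.2 (hx j).2)
  calc |multilinearExt f x|
      ≤ ∑ S, |f S| * ((∏ i ∈ S, x i) * ∏ j ∈ Sᶜ, (1 - x j)) := by
        refine (abs_sum_le_sum_abs _ _).trans_eq (sum_congr rfl fun S _ => ?_)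
        rw [mul_assoc, abs_mul, abs_of_nonneg (hw S)]
    _ ≤ ∑ S, M * ((∏ i ∈ S, x i) * ∏ j ∈ Sᶜ, (1 - x j)) := by
        gcongr with S
        · exact hw S
        · exact hbound S
    _ = M := by rw [← mul_sum, sum_prod_mul_prod_compl_one_sub, mul_one]

theorem abs_multilinearExt_sub_update_le {d : ℕ} {f : Finset (Fin d) → ℝ} {M : ℝ}
    (hbound : ∀ S, |f S| ≤ M) {z : Fin d → ℝ} (hz : ∀ j, z j ∈ Set.Icc (0 : ℝ) 1)
    (i : Fin d) (t : ℝ) :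
    |multilinearExt f (WithLp.toLp 2 z) - multilinearExt f (WithLp.toLp 2 (Function.update z i t))|
      ≤ 2 * M * |z i - t| := by
  have hcube {c : ℝ} (hc : c ∈ Set.Icc (0 : ℝ) 1) :
      ∀ j, (WithLp.toLp 2 (Function.update z i c) : EuclideanSpace ℝ (Fin d)) j ∈ Set.Icc 0 1 := by
    intro j
    by_cases hj : j = i
    · simpa [hj] using hc
    · simpa [hj] using hz j
  have h1 := abs_multilinearExt_le hbound (hcube (c := 1) (by norm_num))
  have h0 := abs_multilinearExt_le hbound (hcube (c := 0) (by norm_num))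
  have hzi := multilinearExt_update f z i (z i)
  rw [Function.update_eq_self] at hzi
  rw [hzi, multilinearExt_update f z i t]
  rw [show ∀ a b : ℝ, (1 - z i) * a + z i * b - ((1 - t) * a + t * b) = (z i - t) * (b - a) by
    intros; ring, abs_mul, mul_comm]
  gcongr
  exact (abs_sub _ _).trans (by linarith)

section Hybrid

variable {ι : Type*} [DecidableEq ι] {K : Set ℝ} {g : (ι → ℝ) → ℝ} {L : ℝ}

theorem abs_sub_le_mul_sum_abs_sub_of_eqOn_compl
    (hg : ∀ z, (∀ j, z j ∈ K) → ∀ i, ∀ t ∈ K, |g z - g (Function.update z i t)| ≤ L * |z i - t|)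
    (s : Finset ι) {x y : ι → ℝ} (hx : ∀ i, x i ∈ K) (hy : ∀ i, y i ∈ K)
    (hxy : Set.EqOn x y (↑s)ᶜ) :
    |g x - g y| ≤ L * ∑ i ∈ s, |x i - y i| := by
  induction s using Finset.induction_on generalizing x with
  | empty =>
    obtain rfl : x = y := funext fun i => hxy (by simp)
    simp
  | insert a s ha ih =>
    set w := Function.update x a (y a)
    have hw : ∀ i, w i ∈ K := by
      intro i
      by_cases hi : i = a
      · simpa [w, hi] using hy a
      · simpa [w, hi] using hx i
    have hwy : Set.EqOn w y (↑s)ᶜ := by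
      intro i hi
      by_cases hia : i = a
      · simp [w, hia]
      · simpa [w, hia] using hxy (by simpa [hia] using hi)
    have hsum : ∑ i ∈ s, |w i - y i| = ∑ i ∈ s, |x i - y i| :=
      sum_congr rfl fun i hi => by simp [w, ne_of_mem_of_not_mem hi ha]
    calc |g x - g y| ≤ |g x - g w| + |g w - g y| := abs_sub_le _ _ _
      _ ≤ L * |x a - y a| + L * ∑ i ∈ s, |x i - y i| := by
        gcongr
        · exact hg x hx a (y a) (hy a)
        · exact hsum ▸ ih hw hwy
      _ = L * ∑ i ∈ insert a s, |x i - y i| := by rw [sum_insert ha]; ring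

theorem abs_sub_le_mul_sum_abs_sub [Fintype ι]
    (hg : ∀ z, (∀ j, z j ∈ K) → ∀ i, ∀ t ∈ K, |g z - g (Function.update z i t)| ≤ L * |z i - t|)
    {x y : ι → ℝ} (hx : ∀ i, x i ∈ K) (hy : ∀ i, y i ∈ K) :
    |g x - g y| ≤ L * ∑ i, |x i - y i| :=
  abs_sub_le_mul_sum_abs_sub_of_eqOn_compl hg univ hx hy (by simp)

end Hybrid

theorem multilinear_extension_lipschitz_general
    (d : ℕ) (f : Finset (Fin d) → ℝ) (M : ℝ)
    (hbound : ∀ S : Finset (Fin d), |f S| ≤ M) :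
    ∀ x y : EuclideanSpace ℝ (Fin d),
      (∀ i, x i ∈ Set.Icc (0 : ℝ) 1) → (∀ i, y i ∈ Set.Icc (0 : ℝ) 1) →
      |multilinearExt f x - multilinearExt f y| ≤ 2 * M * Real.sqrt d * ‖x - y‖ := by
  intro x y hx hy
  have hM : 0 ≤ M := (abs_nonneg _).trans (hbound ∅)
  have hcoord := abs_sub_le_mul_sum_abs_sub
    (g := fun z => multilinearExt f (WithLp.toLp 2 z))
    (fun z hz i t _ => abs_multilinearExt_sub_update_le hbound hz i t) hx hy
  calc |multilinearExt f x - multilinearExt f y| ≤ 2 * M * ∑ i, |(x - y) i| := by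
        simpa using hcoord
    _ ≤ 2 * M * (Real.sqrt d * ‖x - y‖) := by
        gcongr
        simpa using EuclideanSpace.sum_abs_le_sqrt_card_mul_norm (x - y)
    _ = 2 * M * Real.sqrt d * ‖x - y‖ := by ring

theorem multilinear_extension_lipschitz
    (d : ℕ) (hd : 1 ≤ d) (f : Finset (Fin d) → ℝ) (M : ℝ)
    (hsub : ∀ A B : Finset (Fin d), A ⊆ B → ∀ x ∉ B,
      f (insert x B) - f B ≤ f (insert x A) - f A)
    (hbound : ∀ S : Finset (Fin d), |f S| ≤ M) :
    ∀ x y : EuclideanSpace ℝ (Fin d),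
      (∀ i, x i ∈ Set.Icc (0 : ℝ) 1) → (∀ i, y i ∈ Set.Icc (0 : ℝ) 1) →
      |multilinearExt f x - multilinearExt f y| ≤ 2 * M * Real.sqrt d * ‖x - y‖ :=
  multilinear_extension_lipschitz_general d f M hbound
end

section
/- Let Ω = {1, …, d} with d ≥ 2 and let f : 2^Ω → ℝ be a submodular set function with |f(S)| ≤ M for every S ⊆ Ω. Then its multilinear extension F : [0,1]^d → ℝ is (4M√(d(d−1)))-smooth: F is differentiable on [0,1]^d and ‖∇F(x) − ∇F(y)‖ ≤ 4M√(d(d−1))·‖x − y‖ for all x, y ∈ [0,1]^d. -/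
/-!
For `x ∈ [0,1]^d` the partial derivative `∂ᵢF(x)` is the expected marginal gain
`f(S ∪ {i}) - f(S)` over the random set `S ⊆ Ω \ {i}` that contains each `j` independently with
probability `x j`. Marginal gains are bounded by `2M`, and the two product distributions for
`x` and `y` have total variation at most `Σ_{j ≠ i} |x j - y j|`, so
`|∂ᵢF(x) - ∂ᵢF(y)| ≤ 4M Σ_{j ≠ i} |x j - y j|`. Cauchy–Schwarz over the `d - 1` summands and
summing the squares over the `d` coordinates gives the factor `√(d(d-1))`.
-/

open Finset

variable {ι : Type*} [DecidableEq ι]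

/-- For `x ∈ [0,1]^ι` and `S ⊆ s`, the probability that the random set containing each `j`
independently with probability `x j` meets `s` exactly in `S`. -/
def bernoulliWeight (s S : Finset ι) (x : ι → ℝ) : ℝ :=
  ∏ j ∈ s, if j ∈ S then x j else 1 - x j

variable {s S : Finset ι} {a : ι} {x y : ι → ℝ}

lemma bernoulliWeight_insert (ha : a ∉ s) :
    bernoulliWeight (insert a s) S x = (if a ∈ S then x a else 1 - x a) * bernoulliWeight s S x :=
  prod_insert ha

lemma bernoulliWeight_insert_right (ha : a ∉ s) :
    bernoulliWeight s (insert a S) x = bernoulliWeight s S x :=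
  prod_congr rfl fun j hj ↦ by simp [ne_of_mem_of_not_mem hj ha]

lemma bernoulliWeight_nonneg (hx : ∀ i, x i ∈ Set.Icc (0 : ℝ) 1) : 0 ≤ bernoulliWeight s S x :=
  prod_nonneg fun j _ ↦ by split_ifs <;> linarith [(hx j).1, (hx j).2]

lemma sum_bernoulliWeight (s : Finset ι) (x : ι → ℝ) :
    ∑ S ∈ s.powerset, bernoulliWeight s S x = 1 := by
  induction s using Finset.induction_on with
  | empty => simp [bernoulliWeight]
  | insert a s ha ih =>
    simp only [sum_powerset_insert ha, bernoulliWeight_insert ha, bernoulliWeight_insert_right ha,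
      mem_insert_self, if_true]
    rw [sum_congr rfl fun S hS ↦ by rw [if_neg (notMem_of_mem_powerset_of_notMem hS ha)],
      ← mul_sum, ← mul_sum, ih]
    ring

lemma abs_bernoulliWeight_insert_sub_le (hx : ∀ i, x i ∈ Set.Icc (0 : ℝ) 1)
    (hy : ∀ i, y i ∈ Set.Icc (0 : ℝ) 1) (ha : a ∉ s) (T : Finset ι) :
    |bernoulliWeight (insert a s) T x - bernoulliWeight (insert a s) T y|
      ≤ (if a ∈ T then x a else 1 - x a) * |bernoulliWeight s T x - bernoulliWeight s T y|
        + |x a - y a| * bernoulliWeight s T y := by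
  rw [bernoulliWeight_insert ha, bernoulliWeight_insert ha]
  set c : ℝ := if a ∈ T then x a else 1 - x a
  set c' : ℝ := if a ∈ T then y a else 1 - y a
  have hc : 0 ≤ c := by unfold c; split_ifs <;> linarith [(hx a).1, (hx a).2]
  have hcc' : |c - c'| = |x a - y a| := by
    unfold c c'; split_ifs
    · rfl
    · rw [abs_sub_comm]; ring_nf
  rw [← hcc']
  calc _ = |c * (bernoulliWeight s T x - bernoulliWeight s T y)
        + (c - c') * bernoulliWeight s T y| := by congr 1; ring
    _ ≤ _ := by
      grw [abs_add_le, abs_mul, abs_mul, abs_of_nonneg hc,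
        abs_of_nonneg (bernoulliWeight_nonneg hy)]

lemma sum_abs_bernoulliWeight_sub_le (hx : ∀ i, x i ∈ Set.Icc (0 : ℝ) 1)
    (hy : ∀ i, y i ∈ Set.Icc (0 : ℝ) 1) (s : Finset ι) :
    ∑ S ∈ s.powerset, |bernoulliWeight s S x - bernoulliWeight s S y|
      ≤ 2 * ∑ j ∈ s, |x j - y j| := by
  induction s using Finset.induction_on with
  | empty => simp [bernoulliWeight]
  | insert a s ha ih =>
    set D := ∑ S ∈ s.powerset, |bernoulliWeight s S x - bernoulliWeight s S y|
    calc _ ≤ ∑ S ∈ s.powerset, ((1 - x a) * |bernoulliWeight s S x - bernoulliWeight s S y|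
            + |x a - y a| * bernoulliWeight s S y)
          + ∑ S ∈ s.powerset, (x a * |bernoulliWeight s S x - bernoulliWeight s S y|
            + |x a - y a| * bernoulliWeight s S y) := by
          rw [sum_powerset_insert ha]
          gcongr with S hS S hS
          · simpa [notMem_of_mem_powerset_of_notMem hS ha] using
              abs_bernoulliWeight_insert_sub_le hx hy ha S
          · simpa [bernoulliWeight_insert_right ha] using
              abs_bernoulliWeight_insert_sub_le hx hy ha (insert a S)
      _ = D + 2 * |x a - y a| := by
          simp only [sum_add_distrib, ← mul_sum, sum_bernoulliWeight]
          ring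
      _ ≤ 2 * ∑ j ∈ insert a s, |x j - y j| := by
          rw [sum_insert ha]
          linarith

section

variable [Fintype ι]

def expectedMarginalGain (f : Finset ι → ℝ) (x : ι → ℝ) (i : ι) : ℝ :=
  ∑ S ∈ (univ.erase i).powerset, (f (insert i S) - f S) * bernoulliWeight (univ.erase i) S x

lemma expectedMarginalGain_eq_sum (f : Finset ι → ℝ) (x : ι → ℝ) (i : ι) :
    expectedMarginalGain f x i
      = ∑ S, (if i ∈ S then f S else -f S) * bernoulliWeight (univ.erase i) S x := by
  have hi : i ∉ univ.erase i := notMem_erase i univ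
  have huniv : (univ : Finset (Finset ι)) = (insert i (univ.erase i)).powerset := by
    rw [insert_erase (mem_univ i), powerset_univ]
  rw [huniv, sum_powerset_insert hi, ← sum_add_distrib, expectedMarginalGain]
  refine sum_congr rfl fun S hS ↦ ?_
  rw [if_neg (notMem_of_mem_powerset_of_notMem hS hi), if_pos (mem_insert_self i S),
    bernoulliWeight_insert_right hi]
  ring

lemma abs_expectedMarginalGain_sub_le {f : Finset ι → ℝ} {M : ℝ} (hf : ∀ S, |f S| ≤ M)
    (hx : ∀ i, x i ∈ Set.Icc (0 : ℝ) 1) (hy : ∀ i, y i ∈ Set.Icc (0 : ℝ) 1) (i : ι) :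
    |expectedMarginalGain f x i - expectedMarginalGain f y i|
      ≤ 4 * M * ∑ j ∈ univ.erase i, |x j - y j| := by
  have hM : 0 ≤ M := (abs_nonneg _).trans (hf ∅)
  have hgain : ∀ S, |f (insert i S) - f S| ≤ 2 * M := fun S ↦
    (abs_sub _ _).trans (by linarith [hf (insert i S), hf S])
  calc _ = |∑ S ∈ (univ.erase i).powerset, (f (insert i S) - f S)
        * (bernoulliWeight (univ.erase i) S x - bernoulliWeight (univ.erase i) S y)| := by
        simp only [expectedMarginalGain, mul_sub, sum_sub_distrib]
    _ ≤ ∑ S ∈ (univ.erase i).powerset, 2 * M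
        * |bernoulliWeight (univ.erase i) S x - bernoulliWeight (univ.erase i) S y| := by
        grw [abs_sum_le_sum_abs]
        gcongr with S
        rw [abs_mul]
        gcongr
        exact hgain S
    _ ≤ 4 * M * ∑ j ∈ univ.erase i, |x j - y j| := by
        grw [← mul_sum, sum_abs_bernoulliWeight_sub_le hx hy]
        linarith

lemma norm_le_of_abs_le_sum_erase {u v : EuclideanSpace ℝ ι} {C : ℝ} (hC : 0 ≤ C)
    (h : ∀ i, |v i| ≤ C * ∑ j ∈ univ.erase i, |u j|) :
    ‖v‖ ≤ C * √(Fintype.card ι * (Fintype.card ι - 1)) * ‖u‖ := by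
  set n : ℝ := (Fintype.card ι : ℝ)
  have hcoord : ∀ i, v i ^ 2 ≤ C ^ 2 * (n - 1) * ‖u‖ ^ 2 := fun i ↦
    calc v i ^ 2 ≤ C ^ 2 * (∑ j ∈ univ.erase i, |u j|) ^ 2 := by
          rw [← sq_abs, ← mul_pow]; gcongr; exact h i
      _ ≤ C ^ 2 * ((n - 1) * ∑ j ∈ univ.erase i, |u j| ^ 2) := by
          grw [sq_sum_le_card_mul_sum_sq, cast_card_erase_of_mem (mem_univ i), card_univ]
      _ ≤ C ^ 2 * (n - 1) * ‖u‖ ^ 2 := by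
          have hn : 1 ≤ n := Nat.one_le_cast.mpr (Fintype.card_pos_iff.mpr ⟨i⟩)
          rw [mul_assoc, EuclideanSpace.real_norm_sq_eq]
          gcongr
          simp only [sq_abs]
          exact sum_le_sum_of_subset_of_nonneg (subset_univ _) fun j _ _ ↦ sq_nonneg _
  have hn : 0 ≤ n * (n - 1) := by
    rcases (Fintype.card ι).eq_zero_or_pos with h0 | hpos
    · simp [n, h0]
    · have : (1 : ℝ) ≤ n := Nat.one_le_cast.mpr hpos
      nlinarith
  have hsq : ‖v‖ ^ 2 ≤ (C * √(n * (n - 1)) * ‖u‖) ^ 2 :=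
    calc ‖v‖ ^ 2 = ∑ i, v i ^ 2 := EuclideanSpace.real_norm_sq_eq v
      _ ≤ ∑ _i : ι, C ^ 2 * (n - 1) * ‖u‖ ^ 2 := sum_le_sum fun i _ ↦ hcoord i
      _ = (C * √(n * (n - 1)) * ‖u‖) ^ 2 := by
          rw [sum_const, card_univ, nsmul_eq_mul, mul_pow, mul_pow, Real.sq_sqrt hn]
          ring
  exact (pow_le_pow_iff_left₀ (norm_nonneg _) (by positivity) two_ne_zero).mp hsq

lemma hasFDerivAt_bernoulliWeight (s S : Finset ι) (x : EuclideanSpace ℝ ι) :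
    HasFDerivAt (fun z : EuclideanSpace ℝ ι ↦ bernoulliWeight s S z.ofLp)
      (∑ i ∈ s, bernoulliWeight (s.erase i) S x.ofLp •
        if i ∈ S then EuclideanSpace.proj (𝕜 := ℝ) i else -EuclideanSpace.proj i) x :=
  HasFDerivAt.finsetProd fun i _ ↦ by
    split_ifs
    · exact (EuclideanSpace.proj (𝕜 := ℝ) i).hasFDerivAt
    · exact (EuclideanSpace.proj (𝕜 := ℝ) i).hasFDerivAt.const_sub 1

end

lemma multilinearExt_eq_sum_bernoulliWeight {d : ℕ} (f : Finset (Fin d) → ℝ)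
    (x : EuclideanSpace ℝ (Fin d)) :
    multilinearExt f x = ∑ S, f S * bernoulliWeight univ S x.ofLp := by
  simp [multilinearExt, bernoulliWeight, prod_ite, mul_assoc, filter_notMem_eq_sdiff,
    compl_eq_univ_sdiff]

lemma hasGradientAt_multilinearExt {d : ℕ} (f : Finset (Fin d) → ℝ)
    (x : EuclideanSpace ℝ (Fin d)) :
    HasGradientAt (multilinearExt f) (WithLp.toLp 2 (expectedMarginalGain f x.ofLp)) x := by
  rw [hasGradientAt_iff_hasFDerivAt, funext (multilinearExt_eq_sum_bernoulliWeight f)]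
  refine (HasFDerivAt.fun_sum fun S _ ↦
    (hasFDerivAt_bernoulliWeight univ S x).const_mul (f S)).congr_fderiv ?_
  ext v
  simp only [_root_.sum_apply, smul_apply, InnerProductSpace.toDual_apply_apply,
    PiLp.inner_apply, RCLike.inner_apply, conj_trivial, smul_eq_mul, mul_sum,
    expectedMarginalGain_eq_sum]
  rw [sum_comm]
  refine sum_congr rfl fun i _ ↦ sum_congr rfl fun S _ ↦ ?_
  split_ifs <;> simp only [PiLp.proj_apply, neg_apply] <;> ring

theorem multilinear_extension_smooth_general
    (d : ℕ) (f : Finset (Fin d) → ℝ) (M : ℝ)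
    (hbound : ∀ S : Finset (Fin d), |f S| ≤ M) :
    Differentiable ℝ (multilinearExt f) ∧
    ∀ x y : EuclideanSpace ℝ (Fin d),
      (∀ i, x i ∈ Set.Icc (0 : ℝ) 1) → (∀ i, y i ∈ Set.Icc (0 : ℝ) 1) →
      ‖gradient (multilinearExt f) x - gradient (multilinearExt f) y‖
        ≤ 4 * M * Real.sqrt (d * (d - 1)) * ‖x - y‖ := by
  have hgrad := hasGradientAt_multilinearExt f
  refine ⟨fun x ↦ (hgrad x).differentiableAt, fun x y hx hy ↦ ?_⟩
  have hM : 0 ≤ M := (abs_nonneg _).trans (hbound ∅)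
  rw [(hgrad x).gradient, (hgrad y).gradient]
  simpa using norm_le_of_abs_le_sum_erase (u := x - y) (by positivity : 0 ≤ 4 * M)
    fun i ↦ abs_expectedMarginalGain_sub_le hbound hx hy i

theorem multilinear_extension_smooth
    (d : ℕ) (hd : 2 ≤ d) (f : Finset (Fin d) → ℝ) (M : ℝ)
    (hsub : ∀ A B : Finset (Fin d), A ⊆ B → ∀ x ∉ B,
      f (insert x B) - f B ≤ f (insert x A) - f A)
    (hbound : ∀ S : Finset (Fin d), |f S| ≤ M) :
    Differentiable ℝ (multilinearExt f) ∧
    ∀ x y : EuclideanSpace ℝ (Fin d),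
      (∀ i, x i ∈ Set.Icc (0 : ℝ) 1) → (∀ i, y i ∈ Set.Icc (0 : ℝ) 1) →
      ‖gradient (multilinearExt f) x - gradient (multilinearExt f) y‖
        ≤ 4 * M * Real.sqrt (d * (d - 1)) * ‖x - y‖ :=
  multilinear_extension_smooth_general d f M hbound
end
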